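/- arXiv:1405.4718 — 5 statements merged into one kernel-verified Lean document; each statement's English description precedes it below -/
import Mathlib

section
/- Let λ = (h,1,1,…,1) ∈ ℤ^l be a hook partition (h ≥ 1, l ≥ 1) and μ = (0,…,0), and let 1 = (1,…,1) be the weight with h+l−1 entries. Then P_{λ/μ,1} has the integer decomposition property: for every integer k ≥ 1, every integral GT-pattern of shape kλ/kμ and weight k·1 is an entrywise sum of k integral GT-patterns of shape λ/μ and weight 1. -/
open Finset

/-- A real `(m+1) × n` array satisfying the Gelfand–Tsetlin inequalities:
rows increase upwards along columns, and down-right diagonals decrease.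
Row `0` is the bottom row, row `m` the top row. -/
def IsGTPattern (m n : ℕ) (x : Fin (m + 1) → Fin n → ℝ) : Prop :=
  (∀ (i : Fin m) (j : Fin n), x i.castSucc j ≤ x i.succ j) ∧
  (∀ (i : Fin m) (j : Fin n) (h : (j : ℕ) + 1 < n),
    x i.succ ⟨(j : ℕ) + 1, h⟩ ≤ x i.castSucc j)

/-- The Gelfand–Tsetlin polytope `P_{λ/μ,w}`: row `0` is `μ`, row `m` is `λ`,
and the weight vector `w` has `m` entries, prescribing the successive
differences of row sums. -/
def gtPolytope (m n : ℕ) (lam mu : Fin n → ℤ) (w : Fin m → ℤ) :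
    Set (Fin (m + 1) → Fin n → ℝ) :=
  {x | IsGTPattern m n x ∧ (∀ j, x 0 j = (mu j : ℝ)) ∧
    (∀ j, x (Fin.last m) j = (lam j : ℝ)) ∧
    ∀ i : Fin m, (∑ j, x i.succ j) - (∑ j, x i.castSucc j) = (w i : ℝ)}

/-- `P_{λ/μ,w}` has the integer decomposition property: for every `k ≥ 1`,
every integral GT-pattern of shape `kλ/kμ` and weight `kw` is an entrywise sum
of `k` integral GT-patterns of shape `λ/μ` and weight `w`. -/
def HasIDP (m n : ℕ) (lam mu : Fin n → ℤ) (w : Fin m → ℤ) : Prop :=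
  ∀ k : ℕ, 1 ≤ k →
    ∀ x ∈ gtPolytope m n (fun j => (k : ℤ) * lam j) (fun j => (k : ℤ) * mu j)
        (fun i => (k : ℤ) * w i),
      (∀ i j, ∃ z : ℤ, x i j = z) →
      ∃ y : Fin k → Fin (m + 1) → Fin n → ℝ,
        (∀ t, y t ∈ gtPolytope m n lam mu w) ∧
        (∀ t i j, ∃ z : ℤ, y t i j = z) ∧
        ∀ i j, x i j = ∑ t, y t i j

/-!
Split an integral pattern `Z` of shape `k • (h, 1, …, 1)` and weight `k • 1` into `k` level
patterns. In each column `j ≥ 1` the entries lie in `[0, k]`, and there the `t`-th summand is the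
indicator of `t < Z i j`; its first column is forced by the row sums to be `i` minus the number of
ones in row `i`. The GT inequalities in columns `≥ 1` survive because thresholding is monotone.
In the first column they reduce to two counting facts: between consecutive rows a level is crossed
in at most one column, and row `i` of `Z` vanishes from column `i` on, so it has at most `i - 1`
ones outside the first column.
-/

lemma exists_int_lift {a b : ℕ} (x : Fin a → Fin b → ℝ) (hx : ∀ i j, ∃ z : ℤ, x i j = z) :
    ∃ Z : ℕ → ℕ → ℤ, x = fun (i : Fin a) (j : Fin b) => (Z i j : ℝ) := by
  choose z hz using hx
  refine ⟨fun i j => if h : i < a ∧ j < b then z ⟨i, h.1⟩ ⟨j, h.2⟩ else 0, ?_⟩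
  funext i j
  simp [hz]

lemma mem_gtPolytope_iff {m n : ℕ} {lam mu : Fin n → ℤ} {w : Fin m → ℤ} (Z : ℕ → ℕ → ℤ) :
    (fun (i : Fin (m + 1)) (j : Fin n) => (Z i j : ℝ)) ∈ gtPolytope m n lam mu w ↔
      (∀ i < m, ∀ j < n, Z i j ≤ Z (i + 1) j) ∧
      (∀ i < m, ∀ j, j + 1 < n → Z (i + 1) (j + 1) ≤ Z i j) ∧
      (∀ j (hj : j < n), Z 0 j = mu ⟨j, hj⟩) ∧
      (∀ j (hj : j < n), Z m j = lam ⟨j, hj⟩) ∧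
      ∀ i (hi : i < m), ∑ j ∈ range n, Z (i + 1) j - ∑ j ∈ range n, Z i j = w ⟨i, hi⟩ := by
  simp only [gtPolytope, IsGTPattern, Set.mem_ofPred_eq, Fin.forall_iff, Fin.val_succ,
    Fin.val_castSucc, Fin.val_zero, Fin.val_last, Int.cast_le, Int.cast_inj,
    ← Int.cast_sum, ← Int.cast_sub,
    Fin.sum_univ_eq_sum_range]
  refine and_assoc.trans (and_congr_right' (and_congr_left' ?_))
  exact forall₂_congr fun i _ => ⟨fun h j hj => h j (by omega) hj, fun h j _ => h j⟩

/-- An integral GT pattern of shape `k • (h, 1, …, 1) / 0` and weight `k • 1`, with rows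
`0, …, m`, columns `0, …, n - 1` and `h = m + 1 - n`, indexed by `ℕ` (other entries are ignored).
The top-left entry `k * h` is forced by the row sums. -/
structure IsScaledHookArray (m n k : ℕ) (Z : ℕ → ℕ → ℤ) : Prop where
  mono : ∀ i < m, ∀ j < n, Z i j ≤ Z (i + 1) j
  diag : ∀ i < m, ∀ j, j + 1 < n → Z (i + 1) (j + 1) ≤ Z i j
  bot : ∀ j < n, Z 0 j = 0
  top : ∀ j, 1 ≤ j → j < n → Z m j = k
  rowSum : ∀ i < m, ∑ j ∈ range n, Z (i + 1) j - ∑ j ∈ range n, Z i j = k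

def layer (t : ℕ) (a : ℤ) : ℤ := if (t : ℤ) < a then 1 else 0

lemma layer_mono (t : ℕ) : Monotone (layer t) := by
  intro a b hab
  unfold layer
  split_ifs <;> omega

lemma layer_le_one (t : ℕ) (a : ℤ) : layer t a ≤ 1 := by
  unfold layer; split_ifs <;> omega

lemma sum_range_layer (k : ℕ) {a : ℤ} (ha : 0 ≤ a) :
    ∑ t ∈ range k, layer t a = min a k := by
  induction k with
  | zero => simpa using ha
  | succ k ih =>
    rw [sum_range_succ, ih, layer]
    push_cast
    split_ifs <;> omega

@[simp] lemma layer_zero (t : ℕ) : layer t 0 = 0 := by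
  simp [layer]

def hookLayer (n : ℕ) (Z : ℕ → ℕ → ℤ) (t i j : ℕ) : ℤ :=
  if j = 0 then i - ∑ j' ∈ Ico 1 n, layer t (Z i j') else layer t (Z i j)

lemma sum_range_hookLayer {n : ℕ} (hn : 1 ≤ n) (Z : ℕ → ℕ → ℤ) (t i : ℕ) :
    ∑ j ∈ range n, hookLayer n Z t i j = i := by
  rw [sum_range_eq_add_Ico _ hn]
  unfold hookLayer
  rw [if_pos rfl, sum_congr rfl fun j hj => if_neg (by simp at hj; omega)]
  ring

namespace IsScaledHookArray

variable {m n k : ℕ} {Z : ℕ → ℕ → ℤ} (hZ : IsScaledHookArray m n k Z)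
include hZ

lemma col_mono {i i' j : ℕ} (hii' : i ≤ i') (hi' : i' ≤ m) (hj : j < n) :
    Z i j ≤ Z i' j := by
  induction i', hii' using Nat.le_induction with
  | base => rfl
  | succ i' _ ih => exact (ih (by omega)).trans (hZ.mono i' (by omega) j hj)

lemma nonneg {i j : ℕ} (hi : i ≤ m) (hj : j < n) : 0 ≤ Z i j :=
  (hZ.bot j hj).symm.le.trans (hZ.col_mono i.zero_le hi hj)

lemma le_of_one_le {i j : ℕ} (hi : i ≤ m) (hj₁ : 1 ≤ j) (hj : j < n) : Z i j ≤ k :=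
  (hZ.col_mono hi le_rfl hj).trans_eq (hZ.top j hj₁ hj)

lemma row_succ_le {i j : ℕ} (hi : i ≤ m) (hj : j + 1 < n) : Z i (j + 1) ≤ Z i j := by
  rcases i with _ | i
  · rw [hZ.bot _ hj, hZ.bot _ (by omega)]
  · exact (hZ.diag i (by omega) j hj).trans (hZ.mono i (by omega) j (by omega))

lemma row_anti {i j j' : ℕ} (hi : i ≤ m) (hjj' : j ≤ j') (hj' : j' < n) :
    Z i j' ≤ Z i j := by
  induction j', hjj' using Nat.le_induction with
  | base => rfl
  | succ j' _ ih => exact (hZ.row_succ_le hi hj').trans (ih (by omega))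

lemma eq_zero_of_le {i j : ℕ} (hi : i ≤ m) (hij : i ≤ j) (hj : j < n) : Z i j = 0 := by
  refine le_antisymm ?_ (hZ.nonneg hi hj)
  induction i generalizing j with
  | zero => exact (hZ.bot j hj).le
  | succ i ih =>
    obtain ⟨j, rfl⟩ : ∃ j', j = j' + 1 := ⟨j - 1, by omega⟩
    exact (hZ.diag i (by omega) j hj).trans (ih (by omega) (by omega) (by omega))

lemma sum_row_eq {i : ℕ} (hi : i ≤ m) : ∑ j ∈ range n, Z i j = k * i := by
  induction i with
  | zero => simpa using sum_eq_zero fun j hj => hZ.bot j (mem_range.1 hj)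
  | succ i ih =>
    have := hZ.rowSum i (by omega)
    push_cast
    linarith [ih (by omega)]

/-- Between two consecutive rows, level `t` is crossed in at most one column: crossings in
columns `a < b` would give `Z (i+1) b ≤ Z i (b-1) ≤ Z i a ≤ t < Z (i+1) b`. -/
lemma sum_layer_succ_le {i : ℕ} (hi : i < m) (t : ℕ) {s : Finset ℕ} (hs : ∀ j ∈ s, j < n) :
    ∑ j ∈ s, layer t (Z (i + 1) j) ≤ ∑ j ∈ s, layer t (Z i j) + 1 := by
  set crossing := s.filter fun j => Z i j ≤ t ∧ (t : ℤ) < Z (i + 1) j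
  have hcard : #crossing ≤ 1 := by
    refine card_le_one.2 fun a ha b hb => ?_
    simp only [crossing, mem_filter] at ha hb
    have key : ∀ a b, a ∈ s → b ∈ s → a < b → Z i a ≤ t → (t : ℤ) < Z (i + 1) b → False := by
      intro a b ha hb hab hZa hZb
      obtain ⟨b, rfl⟩ : ∃ b', b = b' + 1 := ⟨b - 1, by omega⟩
      have : Z (i + 1) (b + 1) ≤ Z i a :=
        (hZ.diag i hi b (hs _ hb)).trans (hZ.row_anti hi.le (by omega) (by linarith [hs _ hb]))
      omega
    rcases lt_trichotomy a b with hab | hab | hab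
    · exact (key a b ha.1 hb.1 hab ha.2.1 hb.2.2).elim
    · exact hab
    · exact (key b a hb.1 ha.1 hab hb.2.1 ha.2.2).elim
  calc ∑ j ∈ s, layer t (Z (i + 1) j)
      ≤ ∑ j ∈ s, (layer t (Z i j) + if Z i j ≤ t ∧ (t : ℤ) < Z (i + 1) j then 1 else 0) := by
        refine sum_le_sum fun j hj => ?_
        have := hZ.mono i hi j (hs j hj)
        unfold layer
        split_ifs <;> omega
    _ ≤ ∑ j ∈ s, layer t (Z i j) + 1 := by
        rw [sum_add_distrib, sum_boole]
        gcongr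
        exact_mod_cast hcard

lemma sum_layer_add_one_le {i : ℕ} (hi₁ : 1 ≤ i) (hi : i ≤ m) (t : ℕ) :
    ∑ j ∈ Ico 1 n, layer t (Z i j) + 1 ≤ i := by
  have hle : ∑ j ∈ Ico 1 n, layer t (Z i j) ≤ ∑ j ∈ Ico 1 n, if j < i then 1 else 0 := by
    refine sum_le_sum fun j hj => ?_
    split_ifs with hji
    · exact layer_le_one t _
    · rw [hZ.eq_zero_of_le hi (by omega) (mem_Ico.1 hj).2]
      unfold layer
      split_ifs <;> omega
  have hcard : #((Ico 1 n).filter (· < i)) ≤ i - 1 :=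
    (card_le_card fun j hj => by simp only [mem_filter, mem_Ico] at hj ⊢; omega).trans
      (Nat.card_Ico 1 i).le
  rw [sum_boole] at hle
  omega

lemma sum_layer_bot (t : ℕ) : ∑ j ∈ Ico 1 n, layer t (Z 0 j) = 0 :=
  sum_eq_zero fun j hj => by rw [hZ.bot j (mem_Ico.1 hj).2, layer_zero]

lemma sum_range_layer_eq {i j : ℕ} (hi : i ≤ m) (hj₁ : 1 ≤ j) (hj : j < n) :
    ∑ t ∈ range k, layer t (Z i j) = Z i j := by
  rw [sum_range_layer k (hZ.nonneg hi hj), min_eq_left (hZ.le_of_one_le hi hj₁ hj)]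

lemma hookLayer_top_zero (hn : 1 ≤ n) {t : ℕ} (ht : t < k) :
    hookLayer n Z t m 0 = m - (n - 1 : ℤ) := by
  have hone : ∀ j ∈ Ico 1 n, layer t (Z m j) = 1 := fun j hj => by
    rw [hZ.top j (mem_Ico.1 hj).1 (mem_Ico.1 hj).2, layer, if_pos (by exact_mod_cast ht)]
  rw [hookLayer, if_pos rfl, sum_congr rfl hone, sum_const, Nat.card_Ico, nsmul_one,
    Nat.cast_sub hn, Nat.cast_one]

lemma isScaledHookArray_hookLayer (hn : 1 ≤ n) {t : ℕ} (ht : t < k) :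
    IsScaledHookArray m n 1 (hookLayer n Z t) where
  mono i hi j hj := by
    rcases j with _ | j
    · have := hZ.sum_layer_succ_le hi t (s := Ico 1 n) fun j hj => (mem_Ico.1 hj).2
      simp only [hookLayer, if_pos]
      push_cast
      linarith
    · simpa [hookLayer] using layer_mono t (hZ.mono i hi _ hj)
  diag i hi j hj := by
    rcases j with _ | j
    · simp only [hookLayer, if_pos, zero_add, one_ne_zero, if_false]
      rcases i with _ | i
      · rw [hZ.eq_zero_of_le (by omega) le_rfl hj]
        simp [hZ.sum_layer_bot]
      · have := hZ.sum_layer_add_one_le (by omega) hi.le t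
        have := layer_le_one t (Z (i + 2) 1)
        linarith
    · simpa [hookLayer] using layer_mono t (hZ.diag i hi _ hj)
  bot j hj := by
    rcases j with _ | j
    · simp [hookLayer, hZ.sum_layer_bot]
    · simp [hookLayer, hZ.bot _ hj]
  top j hj₁ hj := by
    rw [hookLayer, if_neg (by omega), hZ.top j hj₁ hj, layer, if_pos (by exact_mod_cast ht)]
    simp
  rowSum i _ := by
    rw [sum_range_hookLayer hn, sum_range_hookLayer hn]
    push_cast
    ring

lemma sum_hookLayer (hn : 1 ≤ n) {i j : ℕ} (hi : i ≤ m) (hj : j < n) :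
    ∑ t ∈ range k, hookLayer n Z t i j = Z i j := by
  rcases j with _ | j
  · have hrow := hZ.sum_row_eq hi
    rw [sum_range_eq_add_Ico _ hn] at hrow
    simp only [hookLayer, if_pos, sum_sub_distrib, sum_const, card_range, nsmul_eq_mul]
    rw [sum_comm,
      sum_congr rfl fun j hj => hZ.sum_range_layer_eq hi (mem_Ico.1 hj).1 (mem_Ico.1 hj).2]
    linarith
  · simpa [hookLayer] using hZ.sum_range_layer_eq hi (by omega) hj

end IsScaledHookArray

theorem statement3_general (h l : ℕ) (hl : 1 ≤ l)
    (lam : Fin l → ℤ)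
    (hlam0 : lam ⟨0, hl⟩ = (h : ℤ))
    (hlam1 : ∀ i : Fin l, (i : ℕ) ≠ 0 → lam i = 1) :
    HasIDP (h + l - 1) l lam (fun _ => 0) (fun _ => 1) := by
  intro k _ x hx hint
  obtain ⟨Z, rfl⟩ := exists_int_lift x hint
  obtain ⟨mono, diag, bot, top, rowSum⟩ := (mem_gtPolytope_iff Z).1 hx
  have hZ : IsScaledHookArray (h + l - 1) l k Z :=
    { mono, diag
      bot := fun j hj => by simpa using bot j hj
      top := fun j hj₁ hj => by rw [top j hj, hlam1 ⟨j, hj⟩ (Nat.one_le_iff_ne_zero.1 hj₁), mul_one]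
      rowSum := fun i hi => by simpa using rowSum i hi }
  refine ⟨fun t i j => hookLayer l Z t i j, fun t => (mem_gtPolytope_iff _).2 ?_,
    fun t i j => ⟨_, rfl⟩, fun i j => ?_⟩
  · obtain ⟨mono', diag', bot', top', rowSum'⟩ := hZ.isScaledHookArray_hookLayer hl t.isLt
    refine ⟨mono', diag', bot', fun j hj => ?_, fun i hi => by simpa using rowSum' i hi⟩
    rcases j with _ | j
    · rw [hZ.hookLayer_top_zero hl t.isLt, hlam0]
      omega
    · rw [top' _ (by omega) hj, hlam1 _ (by simp), Nat.cast_one]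
  · dsimp only
    rw [← hZ.sum_hookLayer hl (Nat.lt_succ_iff.1 i.isLt) j.isLt, ← Fin.sum_univ_eq_sum_range,
      Int.cast_sum]

/-- For a hook shape `λ = (h,1,…,1) ∈ ℤ^l`, `μ = 0`, and the weight
`1 = (1,…,1)` with `h + l - 1` entries, the polytope `P_{λ/μ,1}` has the
integer decomposition property. -/
theorem statement3 (h l : ℕ) (hh : 1 ≤ h) (hl : 1 ≤ l)
    (lam : Fin l → ℤ)
    (hlam0 : lam ⟨0, hl⟩ = (h : ℤ))
    (hlam1 : ∀ i : Fin l, (i : ℕ) ≠ 0 → lam i = 1) :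
    HasIDP (h + l - 1) l lam (fun _ => 0) (fun _ => 1) :=
  statement3_general h l hl lam hlam0 hlam1
end

section
/- Let w and w' be nonnegative integer weight vectors with w' a refinement of w, both of total sum |λ|−|μ|. If P_{λ/μ,w'} has the integer decomposition property, then P_{λ/μ,w} has the integer decomposition property. -/
/-!
A refinement is a composite of merges of two adjacent weights, so it suffices to show that merging
preserves IDP. Let `x` be an integral pattern of `k P_{λ/μ,w}` and let `r ≤ r'` be its rows around
the merged weight `a + b`. Between them insert an integral row `c` with `r ≤ c ≤ r'` and
`∑ c = ∑ r + k a` which agrees with `r` left of some column and with `r'` right of it; it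
interlaces with both, so by hypothesis the refined pattern is a sum of `k` integral patterns.
In every summand the middle row lies columnwise between the other two, so a column where `c`
agrees with `r` (resp. `r'`) forces the same equality in every summand. Thus for every pair of adjacent
columns `j, j + 1`, the middle row of a summand equals its lower row at `j` or its upper row at
`j + 1`, which is exactly what makes the lower and upper rows interlace once the middle row is
deleted.
-/

open Finset

/-- `w'` is a (composition) refinement of `w`: there is a monotone surjection
from fine indices onto coarse indices such that each entry of `w` is the sum of
the entries of `w'` in the corresponding block (blocks are consecutive and
nonempty). -/
def Refines {m m' : ℕ} (w : Fin m → ℤ) (w' : Fin m' → ℤ) : Prop :=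
  ∃ g : Fin m' → Fin m, Monotone g ∧ Function.Surjective g ∧
    ∀ s : Fin m, w s = ∑ t ∈ Finset.univ.filter (fun t => g t = s), w' t

section Rows

variable {n : ℕ}

def IsGTStep (a : ℤ) (r r' : Fin n → ℝ) : Prop :=
  (∀ j, r j ≤ r' j) ∧
    (∀ (j : Fin n) (h : (j : ℕ) + 1 < n), r' ⟨(j : ℕ) + 1, h⟩ ≤ r j) ∧
    ∑ j, r' j - ∑ j, r j = a

def IsStaircase {α : Type*} (lo mid hi : Fin n → α) : Prop :=
  ∀ j j' : Fin n, (j' : ℕ) = j + 1 → mid j = lo j ∨ mid j' = hi j'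

lemma IsStaircase.map {α β : Type*} {lo mid hi : Fin n → α} (h : IsStaircase lo mid hi)
    (f : α → β) : IsStaircase (f ∘ lo) (f ∘ mid) (f ∘ hi) :=
  fun j j' hj => (h j j' hj).imp (congrArg f) (congrArg f)

lemma IsGTStep.split {a b : ℤ} {lo mid hi : Fin n → ℝ} (h : IsGTStep (a + b) lo hi)
    (hlo : ∀ j, lo j ≤ mid j) (hhi : ∀ j, mid j ≤ hi j)
    (hsum : ∑ j, mid j - ∑ j, lo j = a) :
    IsGTStep a lo mid ∧ IsGTStep b mid hi := by
  obtain ⟨-, hdiag, hlohi⟩ := h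
  refine ⟨⟨hlo, fun j hj => (hhi _).trans (hdiag j hj), hsum⟩,
    ⟨hhi, fun j hj => (hdiag j hj).trans (hlo j), ?_⟩⟩
  push_cast at hlohi
  linarith

lemma IsGTStep.trans_of_isStaircase {a b : ℤ} {lo mid hi : Fin n → ℝ}
    (h₁ : IsGTStep a lo mid) (h₂ : IsGTStep b mid hi) (hst : IsStaircase lo mid hi) :
    IsGTStep (a + b) lo hi := by
  obtain ⟨hlo, hdiag₁, hsum₁⟩ := h₁
  obtain ⟨hhi, hdiag₂, hsum₂⟩ := h₂
  refine ⟨fun j => (hlo j).trans (hhi j), fun j hj => ?_, by push_cast; linarith⟩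
  rcases hst j ⟨(j : ℕ) + 1, hj⟩ rfl with h | h
  · exact (hdiag₂ j hj).trans h.le
  · exact h.symm.le.trans (hdiag₁ j hj)

lemma IsGTStep.intCast {a : ℤ} {lo hi : Fin n → ℤ}
    (h : IsGTStep a (fun j => (lo j : ℝ)) (fun j => (hi j : ℝ))) :
    (∀ j, lo j ≤ hi j) ∧ ∑ j, (hi j - lo j) = a := by
  obtain ⟨hle, -, hsum⟩ := h
  beta_reduce at hle hsum
  refine ⟨fun j => by exact_mod_cast hle j, ?_⟩
  rw [sum_sub_distrib]
  exact_mod_cast hsum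

lemma isStaircase_of_isStaircase_sum {k : ℕ} {lo mid hi : Fin k → Fin n → ℝ}
    (hlo : ∀ s j, lo s j ≤ mid s j) (hhi : ∀ s j, mid s j ≤ hi s j)
    (hst : IsStaircase (fun j => ∑ s, lo s j) (fun j => ∑ s, mid s j) (fun j => ∑ s, hi s j))
    (s : Fin k) : IsStaircase (lo s) (mid s) (hi s) := fun j j' hj =>
  (hst j j' hj).imp
    (fun h => ((sum_eq_sum_iff_of_le fun s _ => hlo s j).1 h.symm s (mem_univ s)).symm)
    (fun h => (sum_eq_sum_iff_of_le fun s _ => hhi s j').1 h s (mem_univ s))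

lemma exists_isStaircase : ∀ {n : ℕ} (lo hi : Fin n → ℤ), (∀ j, lo j ≤ hi j) →
    ∀ s, 0 ≤ s → s ≤ ∑ j, (hi j - lo j) →
    ∃ mid : Fin n → ℤ, (∀ j, lo j ≤ mid j) ∧ (∀ j, mid j ≤ hi j) ∧
      ∑ j, (mid j - lo j) = s ∧ IsStaircase lo mid hi
  | 0, lo, _, _, s, hs₀, hs => ⟨lo, fun _ => le_rfl, fun j => j.elim0,
      by simp at hs ⊢; omega, fun j => j.elim0⟩
  | n + 1, lo, hi, hle, s, hs₀, hs => by
    rw [Fin.sum_univ_succ] at hs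
    set d := ∑ j : Fin n, (hi j.succ - lo j.succ)
    by_cases hsd : s ≤ d
    · obtain ⟨mid, hlo, hhi, hsum, hst⟩ := exists_isStaircase (fun j => lo j.succ)
        (fun j => hi j.succ) (fun j => hle _) s hs₀ hsd
      refine ⟨Fin.cons (lo 0) mid, Fin.cases le_rfl hlo, Fin.cases (hle 0) hhi,
        by simpa [Fin.sum_univ_succ] using hsum, ?_⟩
      intro j j' hj
      cases j using Fin.cases with
      | zero => exact Or.inl rfl
      | succ j =>
        cases j' using Fin.cases with
        | zero => simp at hj
        | succ j' => exact hst j j' (by simpa using hj)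
    · refine ⟨Fin.cons (lo 0 + (s - d)) (fun j => hi j.succ),
        Fin.cases (by simp; omega) (fun j => hle _), Fin.cases (by simp; omega) (fun _ => le_rfl),
        by simp [Fin.sum_univ_succ, d]; ring, ?_⟩
      intro j j' hj
      cases j' using Fin.cases with
      | zero => simp at hj
      | succ j' => exact Or.inr rfl

end Rows

lemma mem_gtPolytope_iff_s5 {m n : ℕ} {lam mu : Fin n → ℤ} {w : Fin m → ℤ}
    {x : Fin (m + 1) → Fin n → ℝ} :
    x ∈ gtPolytope m n lam mu w ↔ (∀ i, IsGTStep (w i) (x i.castSucc) (x i.succ)) ∧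
      (∀ j, x 0 j = mu j) ∧ ∀ j, x (Fin.last m) j = lam j := by
  simp only [gtPolytope, IsGTPattern, IsGTStep, Set.mem_ofPred_eq, forall_and]
  tauto

section FiberSum

variable {α β γ A : Type*} [Fintype α] [DecidableEq β] [DecidableEq γ]

def fiberSum [AddCommMonoid A] (g : α → β) (f : α → A) (b : β) : A :=
  ∑ a with g a = b, f a

lemma fiberSum_id [Fintype β] [AddCommMonoid A] (f : β → A) : fiberSum id f = f := by
  ext b
  simp [fiberSum, filter_eq']

lemma fiberSum_comp [Fintype β] [AddCommMonoid A] (g : β → γ) (h : α → β) (f : α → A) :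
    fiberSum (g ∘ h) f = fiberSum g (fiberSum h f) := by
  ext c
  rw [fiberSum, ← sum_fiberwise_of_maps_to (t := {b | g b = c}) (g := h) (by simp)]
  refine sum_congr rfl fun b hb => ?_
  rw [fiberSum, filter_filter]
  congr 1
  ext a
  simp only [mem_filter, mem_univ, true_and] at hb ⊢
  exact ⟨And.right, by rintro rfl; exact ⟨hb, rfl⟩⟩

lemma mul_fiberSum [NonUnitalNonAssocSemiring A] (g : α → β) (f : α → A) (c : A) :
    (fun b => c * fiberSum g f b) = fiberSum g (fun a => c * f a) := by
  ext b
  simp [fiberSum, mul_sum]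

lemma fiberSum_nonneg [AddCommMonoid A] [PartialOrder A] [IsOrderedAddMonoid A] {g : α → β}
    {f : α → A} (hf : ∀ a, 0 ≤ f a) (b : β) : 0 ≤ fiberSum g f b :=
  sum_nonneg fun a _ => hf a

end FiberSum

section Merge

variable {M : ℕ}

lemma Fin.succ_castSucc_succAbove_castSucc_of_ne {t i : Fin M} (h : i ≠ t) :
    t.succ.castSucc.succAbove i.castSucc = (t.castSucc.succAbove i).castSucc := by
  have h' : (i : ℕ) ≠ t := fun e => h (Fin.ext e)
  ext
  simp only [Fin.succAbove, Fin.lt_def, Fin.val_castSucc, Fin.val_succ]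
  split_ifs <;> simp <;> omega

lemma Fin.succ_castSucc_succAbove_castSucc_self (t : Fin M) :
    t.succ.castSucc.succAbove t.castSucc = t.castSucc.castSucc := by
  rw [Fin.castSucc_succAbove_castSucc, Fin.succAbove_succ_self]

lemma Fin.succ_castSucc_succAbove_succ (t i : Fin M) :
    t.succ.castSucc.succAbove i.succ = (t.castSucc.succAbove i).succ := by
  rw [← Fin.succ_castSucc, Fin.succ_succAbove_succ]

lemma Fin.succ_castSucc_succAbove_succ_self (t : Fin M) :
    t.succ.castSucc.succAbove t.succ = t.succ.succ := by
  rw [Fin.succ_castSucc_succAbove_succ, Fin.succAbove_castSucc_self]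

lemma fiberSum_predAbove_of_ne {A : Type*} [AddCommMonoid A] (f : Fin (M + 1) → A)
    {t i : Fin M} (h : i ≠ t) : fiberSum t.predAbove f i = f (t.castSucc.succAbove i) := by
  have : ({u | t.predAbove u = i} : Finset _) = {t.castSucc.succAbove i} := by
    ext u
    simp only [mem_filter, mem_univ, true_and, mem_singleton]
    constructor
    · rintro rfl
      have hu : u ≠ t.castSucc := by rintro rfl; simp at h
      exact (Fin.succAbove_predAbove hu).symm
    · rintro rfl
      exact Fin.predAbove_succAbove t i
  rw [fiberSum, this, sum_singleton]

lemma fiberSum_predAbove_self {A : Type*} [AddCommMonoid A] (f : Fin (M + 1) → A) (t : Fin M) :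
    fiberSum t.predAbove f t = f t.castSucc + f t.succ := by
  have : ({u | t.predAbove u = t} : Finset _) = {t.castSucc, t.succ} := by
    ext u
    simp only [mem_filter, mem_univ, true_and, mem_insert, mem_singleton]
    constructor
    · intro h
      by_cases hu : u = t.castSucc
      · exact Or.inl hu
      · right
        rw [← Fin.succAbove_predAbove hu, h, Fin.succAbove_castSucc_self]
    · rintro (rfl | rfl) <;> simp
  rw [fiberSum, this, sum_pair (show t.castSucc < t.succ from Fin.castSucc_lt_succ).ne]

variable {n : ℕ} {lam mu : Fin n → ℤ} {w' : Fin (M + 1) → ℤ}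

lemma insertNth_mem_gtPolytope {t : Fin M} {x : Fin (M + 1) → Fin n → ℝ} {r : Fin n → ℝ}
    (hx : x ∈ gtPolytope M n lam mu (fiberSum t.predAbove w'))
    (hlo : IsGTStep (w' t.castSucc) (x t.castSucc) r)
    (hhi : IsGTStep (w' t.succ) r (x t.succ)) :
    t.succ.castSucc.insertNth r x ∈ gtPolytope (M + 1) n lam mu w' := by
  rw [mem_gtPolytope_iff_s5] at hx ⊢
  obtain ⟨hstep, hbot, htop⟩ := hx
  refine ⟨fun u => ?_, fun j => ?_, fun j => ?_⟩
  · rcases Fin.eq_self_or_eq_succAbove t.castSucc u with rfl | ⟨i, rfl⟩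
    · rw [Fin.succ_castSucc, Fin.insertNth_apply_same,
        ← Fin.succ_castSucc_succAbove_castSucc_self, Fin.insertNth_apply_succAbove]
      exact hlo
    · by_cases h : i = t
      · subst h
        rw [Fin.succAbove_castSucc_self, Fin.insertNth_apply_same,
          ← Fin.succ_castSucc_succAbove_succ_self, Fin.insertNth_apply_succAbove]
        exact hhi
      · rw [← Fin.succ_castSucc_succAbove_castSucc_of_ne h, ← Fin.succ_castSucc_succAbove_succ,
          Fin.insertNth_apply_succAbove, Fin.insertNth_apply_succAbove,
          ← fiberSum_predAbove_of_ne w' h]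
        exact hstep i
  · rw [← Fin.succAbove_ne_zero_zero (a := t.succ.castSucc) (by simp),
      Fin.insertNth_apply_succAbove, hbot]
  · rw [← Fin.succAbove_ne_last_last (a := t.succ.castSucc) (Fin.castSucc_lt_last _).ne,
      Fin.insertNth_apply_succAbove, htop]

lemma comp_succAbove_mem_gtPolytope {t : Fin M} {x : Fin (M + 2) → Fin n → ℝ}
    (hx : x ∈ gtPolytope (M + 1) n lam mu w')
    (ht : IsGTStep (w' t.castSucc + w' t.succ) (x t.castSucc.castSucc) (x t.succ.succ)) :
    x ∘ t.succ.castSucc.succAbove ∈ gtPolytope M n lam mu (fiberSum t.predAbove w') := by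
  rw [mem_gtPolytope_iff_s5] at hx ⊢
  obtain ⟨hstep, hbot, htop⟩ := hx
  refine ⟨fun i => ?_, fun j => ?_, fun j => ?_⟩
  · simp only [Function.comp_apply]
    by_cases h : i = t
    · subst h
      rw [Fin.succ_castSucc_succAbove_castSucc_self, Fin.succ_castSucc_succAbove_succ_self,
        fiberSum_predAbove_self]
      exact ht
    · rw [Fin.succ_castSucc_succAbove_castSucc_of_ne h, Fin.succ_castSucc_succAbove_succ,
        fiberSum_predAbove_of_ne w' h]
      exact hstep _
  · simpa [Fin.succAbove_ne_zero_zero] using hbot j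
  · simpa [Fin.succAbove_ne_last_last, (Fin.castSucc_lt_last _).ne] using htop j

theorem HasIDP.merge (hw' : ∀ u, 0 ≤ w' u) (t : Fin M) (h : HasIDP (M + 1) n lam mu w') :
    HasIDP M n lam mu (fiberSum t.predAbove w') := by
  intro k hk x hx hxint
  choose X hX using hxint
  obtain rfl : x = fun i j => (X i j : ℝ) := funext₂ hX
  rw [mul_fiberSum] at hx
  have hstep := (mem_gtPolytope_iff_s5.1 hx).1 t
  rw [fiberSum_predAbove_self] at hstep
  obtain ⟨hle, hdiff⟩ := hstep.intCast
  obtain ⟨C, hlo, hhi, hC, hst⟩ := exists_isStaircase (X t.castSucc) (X t.succ) hle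
    (k * w' t.castSucc) (by have := hw' t.castSucc; positivity)
    (by rw [hdiff]; have := hw' t.succ; simp only [le_add_iff_nonneg_right]; positivity)
  obtain ⟨hstep_lo, hstep_hi⟩ := hstep.split (mid := fun j => (C j : ℝ))
    (fun j => by exact_mod_cast hlo j) (fun j => by exact_mod_cast hhi j)
    (by rw [← sum_sub_distrib]; exact_mod_cast hC)
  obtain ⟨y, hy, hyint, hysum⟩ := h k hk _ (insertNth_mem_gtPolytope hx hstep_lo hstep_hi)
    fun i j => by
      rcases Fin.eq_self_or_eq_succAbove t.succ.castSucc i with rfl | ⟨i, rfl⟩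
      · rw [Fin.insertNth_apply_same]; exact ⟨_, rfl⟩
      · rw [Fin.insertNth_apply_succAbove]; exact ⟨_, rfl⟩
  have hy_lo : ∀ s, IsGTStep (w' t.castSucc) (y s t.castSucc.castSucc) (y s t.succ.castSucc) :=
    fun s => Fin.succ_castSucc t ▸ (mem_gtPolytope_iff_s5.1 (hy s)).1 t.castSucc
  have hy_hi : ∀ s, IsGTStep (w' t.succ) (y s t.succ.castSucc) (y s t.succ.succ) :=
    fun s => (mem_gtPolytope_iff_s5.1 (hy s)).1 t.succ
  have hst_y : ∀ s,
      IsStaircase (y s t.castSucc.castSucc) (y s t.succ.castSucc) (y s t.succ.succ) := by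
    refine isStaircase_of_isStaircase_sum (fun s => (hy_lo s).1) (fun s => (hy_hi s).1) ?_
    simp only [← hysum]
    rw [← Fin.succ_castSucc_succAbove_castSucc_self, ← Fin.succ_castSucc_succAbove_succ_self]
    simp only [Fin.insertNth_apply_succAbove, Fin.insertNth_apply_same]
    exact hst.map Int.cast
  refine ⟨fun s => y s ∘ t.succ.castSucc.succAbove, fun s => comp_succAbove_mem_gtPolytope (hy s)
      ((hy_lo s).trans_of_isStaircase (hy_hi s) (hst_y s)),
    fun s i j => hyint s _ j,
    fun i j => (congrFun (Fin.insertNth_apply_succAbove _ _ _ i) j).symm.trans (hysum _ j)⟩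

end Merge

section Refinement

variable {m n : ℕ} {lam mu : Fin n → ℤ}

theorem HasIDP.fiberSum_of_strictMono {m' : ℕ} {w' : Fin m' → ℤ} {g : Fin m' → Fin m}
    (hg : StrictMono g) (hgs : Function.Surjective g) (h : HasIDP m' n lam mu w') :
    HasIDP m n lam mu (fiberSum g w') := by
  obtain rfl : m' = m := by
    simpa using Fintype.card_congr (Equiv.ofBijective g ⟨hg.injective, hgs⟩)
  obtain rfl : g = id := (hg.range_inj strictMono_id).1 (by simp [hgs.range_eq])
  rwa [fiberSum_id]

lemma Fin.comp_succAbove_predAbove {α : Type*} {M : ℕ} {g : Fin (M + 1) → α} {t : Fin M}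
    (ht : g t.castSucc = g t.succ) : (g ∘ t.succ.succAbove) ∘ t.predAbove = g := by
  ext u
  by_cases hu : u = t.succ
  · simp [hu, ht]
  · simp [Fin.succ_succAbove_predAbove hu]

theorem HasIDP.fiberSum {m' : ℕ} {w' : Fin m' → ℤ} {g : Fin m' → Fin m} (hg : Monotone g)
    (hgs : Function.Surjective g) (hw' : ∀ u, 0 ≤ w' u) (h : HasIDP m' n lam mu w') :
    HasIDP m n lam mu (fiberSum g w') := by
  induction m' with
  | zero => exact h.fiberSum_of_strictMono (fun a => a.elim0) hgs
  | succ M ih =>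
    by_cases hstrict : StrictMono g
    · exact h.fiberSum_of_strictMono hstrict hgs
    obtain ⟨t, ht⟩ : ∃ t : Fin M, g t.castSucc = g t.succ := by
      simp only [Fin.strictMono_iff_lt_succ, not_forall, not_lt] at hstrict
      obtain ⟨t, ht⟩ := hstrict
      exact ⟨t, (hg Fin.castSucc_lt_succ.le).antisymm ht⟩
    rw [← Fin.comp_succAbove_predAbove ht] at hgs ⊢
    rw [fiberSum_comp]
    exact ih (hg.comp (Fin.strictMono_succAbove _).monotone) hgs.of_comp
      (fiberSum_nonneg hw') (h.merge hw' t)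

end Refinement

theorem statement5_general (n : ℕ) (lam mu : Fin n → ℤ)
    (m m' : ℕ) (w : Fin m → ℤ) (w' : Fin m' → ℤ)
    (hw' : ∀ i, 0 ≤ w' i)
    (href : Refines w w')
    (hidp : HasIDP m' n lam mu w') :
    HasIDP m n lam mu w := by
  obtain ⟨g, hg, hgs, hgw⟩ := href
  obtain rfl : w = fiberSum g w' := funext hgw
  exact hidp.fiberSum hg hgs hw'

/-- If `w'` refines `w` and `P_{λ/μ,w'}` has the integer decomposition
property, then so does `P_{λ/μ,w}`. -/
theorem statement5 (n : ℕ) (hn : 1 ≤ n) (lam mu : Fin n → ℤ)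
    (hlam : Antitone lam) (hmu : Antitone mu)
    (hmu0 : ∀ j, 0 ≤ mu j) (hge : ∀ j, mu j ≤ lam j)
    (m m' : ℕ) (w : Fin m → ℤ) (w' : Fin m' → ℤ)
    (hw : ∀ i, 0 ≤ w i) (hw' : ∀ i, 0 ≤ w' i)
    (hsum : ∑ i, w i = ∑ j, lam j - ∑ j, mu j)
    (hsum' : ∑ i, w' i = ∑ j, lam j - ∑ j, mu j)
    (href : Refines w w')
    (hidp : HasIDP m' n lam mu w') :
    HasIDP m n lam mu w :=
  statement5_general n lam mu m m' w w' hw' href hidp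
end

section
/- Suppose the Gelfand–Tsetlin polytope P_{λ/μ,1} (weight 1 of length |λ|−|μ|) has an extreme point with a non-integer entry. Then: (a) for every weakly decreasing nonnegative integer vector λ⁺ obtained from λ (padded with a trailing zero if needed) by increasing exactly one coordinate by 1, the polytope P_{λ⁺/μ,1} (weight 1 of length |λ⁺|−|μ| = |λ|−|μ|+1) has an extreme point with a non-integer entry; and (b) for every weakly decreasing nonnegative integer vector μ₋ obtained from μ by decreasing exactly one coordinate by 1, the polytope P_{λ/μ₋,1} (weight 1 of length |λ|−|μ|+1) has an extreme point with a non-integer entry. -/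
open Finset

/-!
Enlarging the pattern by entries that are forced keeps extreme points extreme. For (a), pad `x`
with a zero column (it runs from `0` to `0`, so it is forced) and put `λ⁺` on top. The patterns
whose row below the top equals `λ` form a face of the new polytope: off the box row `r` an entry
of that row is bounded by `λ⁺_j = λ_j`, so it attains `λ_j` at an interior point of a segment
only if it does at both ends, and the prescribed row sum then forces the entry in row `r` too.
This face is an affine copy of `P_{λ/μ,1}`, so the padded `x` is extreme, with the same
non-integral entry. Part (b) is the mirror image: put `μ₋` at the bottom and use the face
`row 1 = μ`.
-/

section Segments

variable {𝕜 : Type*} [Field 𝕜] [LinearOrder 𝕜] [IsStrictOrderedRing 𝕜]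

theorem eq_of_mem_openSegment_of_le {a b x : 𝕜} (h : x ∈ openSegment 𝕜 a b) (ha : a ≤ x)
    (hb : b ≤ x) : a = x := by
  rcases eq_or_ne a b with rfl | hab
  · rw [openSegment_same] at h
    exact h.symm
  · rw [openSegment_eq_Ioo' hab] at h
    exact absurd h.2 (max_le ha hb).not_gt

theorem eq_of_mem_openSegment_of_ge {a b x : 𝕜} (h : x ∈ openSegment 𝕜 a b) (ha : x ≤ a)
    (hb : x ≤ b) : a = x := by
  rcases eq_or_ne a b with rfl | hab
  · rw [openSegment_same] at h
    exact h.symm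
  · rw [openSegment_eq_Ioo' hab] at h
    exact absurd h.1 (le_min ha hb).not_gt

end Segments

theorem apply_apply_mem_openSegment {𝕜 ι κ E : Type*} [Semiring 𝕜] [PartialOrder 𝕜]
    [AddCommMonoid E] [Module 𝕜 E] {a b x : ι → κ → E} (h : x ∈ openSegment 𝕜 a b)
    (i : ι) (j : κ) : x i j ∈ openSegment 𝕜 (a i j) (b i j) := by
  obtain ⟨t, s, ht, hs, hts, rfl⟩ := h
  exact ⟨t, s, ht, hs, hts, rfl⟩

theorem mem_extremePoints_of_isExtreme_of_injOn {𝕜 E F : Type*} [Ring 𝕜] [PartialOrder 𝕜]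
    [AddRightMono 𝕜] [AddCommGroup E] [Module 𝕜 E] [AddCommGroup F] [Module 𝕜 F]
    {P : Set E} {Q S : Set F} {y : F} (g : F →ₗ[𝕜] E)
    (hS : IsExtreme 𝕜 Q S) (hgS : Set.MapsTo g S P) (hinj : Set.InjOn g S) (hy : y ∈ S)
    (hgy : g y ∈ P.extremePoints 𝕜) : y ∈ Q.extremePoints 𝕜 := by
  refine hS.extremePoints_subset_extremePoints ⟨hy, fun a ha b hb hyab => hinj ha hy ?_⟩
  refine hgy.2 (hgS ha) (hgS hb) ?_
  have himage := image_openSegment 𝕜 g.toAffineMap a b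
  rw [LinearMap.coe_toAffineMap] at himage
  exact himage ▸ Set.mem_image_of_mem g hyab

theorem eq_of_forall_ne_of_sum_eq {ι M : Type*} [Fintype ι] [DecidableEq ι]
    [AddCancelCommMonoid M] {f g : ι → M} (r : ι) (hne : ∀ i, i ≠ r → f i = g i)
    (hsum : ∑ i, f i = ∑ i, g i) : f = g := by
  funext i
  by_cases hi : i = r
  · subst hi
    have hrest : ∑ j ∈ univ.erase i, f j = ∑ j ∈ univ.erase i, g j :=
      sum_congr rfl fun j hj => hne j (ne_of_mem_erase hj)
    rw [← add_sum_erase _ _ (mem_univ i), ← add_sum_erase _ g (mem_univ i), hrest] at hsum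
    exact add_right_cancel hsum
  · exact hne i hi

theorem antitone_snoc {n : ℕ} {α : Type*} [Preorder α] {f : Fin n → α} {a : α}
    (hf : Antitone f) (ha : ∀ j, a ≤ f j) : Antitone (Fin.snoc f a : Fin (n + 1) → α) := by
  intro i j hij
  induction j using Fin.lastCases with
  | last => induction i using Fin.lastCases <;> simp [ha]
  | cast j =>
    induction i using Fin.lastCases with
    | last => exact absurd hij (not_le.2 (Fin.castSucc_lt_last j))
    | cast i => simpa using hf (Fin.castSucc_le_castSucc_iff.1 hij)

section GelfandTsetlin

variable {m n : ℕ} {lam mu : Fin n → ℤ}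

theorem IsGTPattern.monotone_col {x : Fin (m + 1) → Fin n → ℝ} (h : IsGTPattern m n x)
    (j : Fin n) : Monotone (x · j) :=
  Fin.monotone_iff_le_succ.2 fun i => h.1 i j

variable {w : Fin m → ℤ} {x : Fin (m + 1) → Fin n → ℝ}

theorem mu_le_of_mem_gtPolytope (hx : x ∈ gtPolytope m n lam mu w) (i : Fin (m + 1))
    (j : Fin n) : (mu j : ℝ) ≤ x i j :=
  hx.2.1 j ▸ hx.1.monotone_col j (Fin.zero_le i)

theorem le_lam_of_mem_gtPolytope (hx : x ∈ gtPolytope m n lam mu w) (i : Fin (m + 1))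
    (j : Fin n) : x i j ≤ lam j :=
  hx.2.2.1 j ▸ hx.1.monotone_col j (Fin.le_last i)

theorem sum_row_succ_of_mem_gtPolytope (hx : x ∈ gtPolytope m n lam mu w) (i : Fin m) :
    ∑ j, x i.succ j = ∑ j, x i.castSucc j + w i := by
  linarith [hx.2.2.2 i]

end GelfandTsetlin

section ZeroColumn

variable {m n : ℕ} {lam mu : Fin n → ℤ} {w : Fin m → ℤ}

theorem apply_last_eq_zero_of_mem_gtPolytope {x : Fin (m + 1) → Fin (n + 1) → ℝ}
    (hx : x ∈ gtPolytope m (n + 1) (Fin.snoc lam 0) (Fin.snoc mu 0) w) (i : Fin (m + 1)) :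
    x i (Fin.last n) = 0 :=
  le_antisymm (by simpa using le_lam_of_mem_gtPolytope hx i (Fin.last n))
    (by simpa using mu_le_of_mem_gtPolytope hx i (Fin.last n))

theorem init_col_mem_gtPolytope {x : Fin (m + 1) → Fin (n + 1) → ℝ}
    (hx : x ∈ gtPolytope m (n + 1) (Fin.snoc lam 0) (Fin.snoc mu 0) w) :
    (fun i => Fin.init (x i)) ∈ gtPolytope m n lam mu w := by
  have hlast := apply_last_eq_zero_of_mem_gtPolytope hx
  obtain ⟨⟨hcol, hdiag⟩, hbot, htop, hsum⟩ := hx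
  exact ⟨⟨fun i j => hcol i j.castSucc, fun i j _ => hdiag i j.castSucc (by simp)⟩,
    fun j => by simpa [Fin.init] using hbot j.castSucc,
    fun j => by simpa [Fin.init] using htop j.castSucc,
    fun i => by simpa [Fin.sum_univ_castSucc, hlast, Fin.init] using hsum i⟩

theorem snoc_zero_col_mem_gtPolytope (hmu : ∀ j, 0 ≤ mu j) {x : Fin (m + 1) → Fin n → ℝ}
    (hx : x ∈ gtPolytope m n lam mu w) :
    (fun i => (Fin.snoc (x i) 0 : Fin (n + 1) → ℝ)) ∈
      gtPolytope m (n + 1) (Fin.snoc lam 0) (Fin.snoc mu 0) w := by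
  have hnonneg : ∀ i j, 0 ≤ x i j := fun i j =>
    (Int.cast_nonneg_iff.2 (hmu j)).trans (mu_le_of_mem_gtPolytope hx i j)
  obtain ⟨⟨hcol, hdiag⟩, hbot, htop, hsum⟩ := hx
  refine ⟨⟨fun i j => ?_, fun i j hj => ?_⟩, fun j => ?_, fun j => ?_, fun i => ?_⟩
  · induction j using Fin.lastCases <;> simp [hcol]
  · obtain ⟨j, hjn⟩ := j
    replace hj : j < n := by simpa using hj
    by_cases hj' : j + 1 < n
    · simpa [Fin.snoc, hj, hj'] using hdiag i ⟨j, hj⟩ hj'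
    · simpa [Fin.snoc, hj, hj'] using hnonneg i.castSucc ⟨j, hj⟩
  · induction j using Fin.lastCases <;> simp [hbot]
  · induction j using Fin.lastCases <;> simp [htop]
  · simpa [Fin.sum_univ_castSucc] using hsum i

theorem snoc_zero_col_mem_extremePoints (hmu : ∀ j, 0 ≤ mu j)
    {x : Fin (m + 1) → Fin n → ℝ} (hx : x ∈ (gtPolytope m n lam mu w).extremePoints ℝ) :
    (fun i => (Fin.snoc (x i) 0 : Fin (n + 1) → ℝ)) ∈
      (gtPolytope m (n + 1) (Fin.snoc lam 0) (Fin.snoc mu 0) w).extremePoints ℝ := by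
  refine mem_extremePoints_of_isExtreme_of_injOn
    (LinearMap.compLeft (LinearMap.funLeft ℝ ℝ Fin.castSucc) _) IsExtreme.rfl
    (fun c hc => init_col_mem_gtPolytope hc) (fun a ha b hb hab => ?_)
    (snoc_zero_col_mem_gtPolytope hmu hx.1) ?_
  · funext i j
    induction j using Fin.lastCases with
    | last => rw [apply_last_eq_zero_of_mem_gtPolytope ha, apply_last_eq_zero_of_mem_gtPolytope hb]
    | cast j => exact congrFun (congrFun hab i) j
  · convert hx
    ext i j
    simp [LinearMap.funLeft]

end ZeroColumn

/-- `v` arises from `u` by adding one box to the Young diagram (in row `r`). -/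
def AddsBox {n : ℕ} (u v : Fin n → ℤ) : Prop :=
  ∃ r, v r = u r + 1 ∧ ∀ i, i ≠ r → v i = u i

namespace AddsBox

variable {n : ℕ} {u v : Fin n → ℤ}

theorem le (h : AddsBox u v) (j : Fin n) : u j ≤ v j := by
  obtain ⟨r, hr, hne⟩ := h
  by_cases hj : j = r
  · subst hj; omega
  · exact (hne j hj).ge

theorem succ_le (h : AddsBox u v) (hu : Antitone u) (hv : Antitone v) (j : Fin n)
    (hj : (j : ℕ) + 1 < n) : v ⟨(j : ℕ) + 1, hj⟩ ≤ u j := by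
  obtain ⟨r, -, hne⟩ := h
  have hle : j ≤ ⟨(j : ℕ) + 1, hj⟩ := Fin.le_def.2 (Nat.le_succ _)
  by_cases hjr : j = r
  · rw [hne _ fun h => by simp [← hjr, Fin.ext_iff] at h]
    exact hu hle
  · exact (hne j hjr) ▸ hv hle

theorem sum_eq (h : AddsBox u v) : ∑ j, (v j : ℝ) = ∑ j, (u j : ℝ) + 1 := by
  obtain ⟨r, hr, hne⟩ := h
  have hdiff : ∑ j, ((v j : ℝ) - u j) = 1 := by
    rw [sum_eq_single r (fun j _ hj => by simp [hne j hj]) (by simp)]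
    simp [hr]
  rw [sum_sub_distrib] at hdiff
  linarith

end AddsBox

section TopRow

variable {m n : ℕ} {lam lam' mu : Fin n → ℤ} {w : Fin (m + 1) → ℤ}

theorem snoc_row_mem_gtPolytope {x : Fin (m + 1) → Fin n → ℝ}
    (hx : x ∈ gtPolytope m n lam mu fun i => w i.castSucc) (hle : ∀ j, lam j ≤ lam' j)
    (hsucc_le : ∀ (j : Fin n) (hj : (j : ℕ) + 1 < n), lam' ⟨(j : ℕ) + 1, hj⟩ ≤ lam j)
    (hw : ∑ j, (lam' j : ℝ) - ∑ j, (lam j : ℝ) = w (Fin.last m)) :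
    (Fin.snoc x (fun j => (lam' j : ℝ)) : Fin (m + 2) → Fin n → ℝ) ∈
      gtPolytope (m + 1) n lam' mu w := by
  obtain ⟨⟨hcol, hdiag⟩, hbot, htop, hsum⟩ := hx
  refine ⟨⟨fun i j => ?_, fun i j hj => ?_⟩, fun j => ?_, fun j => by simp, fun i => ?_⟩
  · induction i using Fin.lastCases with
    | last => simpa [htop] using hle j
    | cast i => rw [Fin.succ_castSucc, Fin.snoc_castSucc, Fin.snoc_castSucc]; exact hcol i j
  · induction i using Fin.lastCases with
    | last => simpa [htop] using hsucc_le j hj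
    | cast i => rw [Fin.succ_castSucc, Fin.snoc_castSucc, Fin.snoc_castSucc]; exact hdiag i j hj
  · rw [← Fin.castSucc_zero, Fin.snoc_castSucc]; exact hbot j
  · induction i using Fin.lastCases with
    | last => simpa [htop] using hw
    | cast i =>
      simp only [Fin.succ_castSucc, Fin.snoc_castSucc]
      exact hsum i

theorem init_row_mem_gtPolytope {c : Fin (m + 2) → Fin n → ℝ}
    (hc : c ∈ gtPolytope (m + 1) n lam' mu w) (hrow : ∀ j, c (Fin.last m).castSucc j = lam j) :
    Fin.init c ∈ gtPolytope m n lam mu fun i => w i.castSucc := by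
  obtain ⟨⟨hcol, hdiag⟩, hbot, -, hsum⟩ := hc
  refine ⟨⟨fun i j => ?_, fun i j hj => ?_⟩, hbot, hrow, fun i => ?_⟩
  · simpa only [Fin.init, Fin.succ_castSucc] using hcol i.castSucc j
  · simpa only [Fin.init, Fin.succ_castSucc] using hdiag i.castSucc j hj
  · simpa only [Fin.init, Fin.succ_castSucc] using hsum i.castSucc

theorem isExtreme_row_last_eq (h : AddsBox lam lam') (hw : w (Fin.last m) = 1) :
    IsExtreme ℝ (gtPolytope (m + 1) n lam' mu w)
      {c ∈ gtPolytope (m + 1) n lam' mu w | ∀ j, c (Fin.last m).castSucc j = lam j} := by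
  refine ⟨Set.sep_subset _ _, fun a ha b hb c ⟨_, hc⟩ hcab => ⟨ha, ?_⟩⟩
  obtain ⟨r, -, hne⟩ := id h
  refine congrFun (eq_of_forall_ne_of_sum_eq r (fun j hj => ?_) ?_)
  · have hle : ∀ d ∈ gtPolytope (m + 1) n lam' mu w, d (Fin.last m).castSucc j ≤ lam j :=
      fun d hd => by simpa [hne j hj] using le_lam_of_mem_gtPolytope hd _ j
    exact (hc j).symm ▸ eq_of_mem_openSegment_of_le (apply_apply_mem_openSegment hcab _ j)
      (hc j ▸ hle a ha) (hc j ▸ hle b hb)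
  · have htop := sum_row_succ_of_mem_gtPolytope ha (Fin.last m)
    simp only [Fin.succ_last, ha.2.2.1, hw, Int.cast_one] at htop
    linarith [h.sum_eq]

theorem snoc_row_mem_extremePoints (h : AddsBox lam lam') (hlam : Antitone lam)
    (hlam' : Antitone lam') (hw : w (Fin.last m) = 1) {x : Fin (m + 1) → Fin n → ℝ}
    (hx : x ∈ (gtPolytope m n lam mu fun i => w i.castSucc).extremePoints ℝ) :
    (Fin.snoc x (fun j => (lam' j : ℝ)) : Fin (m + 2) → Fin n → ℝ) ∈
      (gtPolytope (m + 1) n lam' mu w).extremePoints ℝ := by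
  refine mem_extremePoints_of_isExtreme_of_injOn (LinearMap.funLeft ℝ _ Fin.castSucc)
    (isExtreme_row_last_eq h hw) (fun c hc => init_row_mem_gtPolytope hc.1 hc.2)
    (fun a ha b hb hab => ?_)
    ⟨snoc_row_mem_gtPolytope hx.1 h.le (h.succ_le hlam hlam') ?_, ?_⟩ ?_
  · rw [← Fin.snoc_init_self a, ← Fin.snoc_init_self b]
    congr 1
    funext j
    rw [ha.1.2.2.1, hb.1.2.2.1]
  · rw [h.sum_eq, hw]; simp
  · intro j; simpa using hx.1.2.2.1 j
  · simpa [LinearMap.funLeft] using hx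

end TopRow

section BottomRow

variable {m n : ℕ} {lam mu mu' : Fin n → ℤ} {w : Fin (m + 1) → ℤ}

theorem cons_row_mem_gtPolytope {x : Fin (m + 1) → Fin n → ℝ}
    (hx : x ∈ gtPolytope m n lam mu fun i => w i.succ) (hle : ∀ j, mu' j ≤ mu j)
    (hsucc_le : ∀ (j : Fin n) (hj : (j : ℕ) + 1 < n), mu ⟨(j : ℕ) + 1, hj⟩ ≤ mu' j)
    (hw : ∑ j, (mu j : ℝ) - ∑ j, (mu' j : ℝ) = w 0) :
    (Fin.cons (fun j => (mu' j : ℝ)) x : Fin (m + 2) → Fin n → ℝ) ∈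
      gtPolytope (m + 1) n lam mu' w := by
  obtain ⟨⟨hcol, hdiag⟩, hbot, htop, hsum⟩ := hx
  refine ⟨⟨fun i j => ?_, fun i j hj => ?_⟩, fun j => by simp, fun j => ?_, fun i => ?_⟩
  · induction i using Fin.cases with
    | zero => simpa [hbot] using hle j
    | succ i => rw [← Fin.succ_castSucc, Fin.cons_succ, Fin.cons_succ]; exact hcol i j
  · induction i using Fin.cases with
    | zero => simpa [hbot] using hsucc_le j hj
    | succ i => rw [← Fin.succ_castSucc, Fin.cons_succ, Fin.cons_succ]; exact hdiag i j hj
  · rw [← Fin.succ_last, Fin.cons_succ]; exact htop j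
  · induction i using Fin.cases with
    | zero => simpa [hbot] using hw
    | succ i =>
      simp only [← Fin.succ_castSucc, Fin.cons_succ]
      exact hsum i

theorem tail_row_mem_gtPolytope {c : Fin (m + 2) → Fin n → ℝ}
    (hc : c ∈ gtPolytope (m + 1) n lam mu' w) (hrow : ∀ j, c 1 j = mu j) :
    Fin.tail c ∈ gtPolytope m n lam mu fun i => w i.succ := by
  obtain ⟨⟨hcol, hdiag⟩, -, htop, hsum⟩ := hc
  refine ⟨⟨fun i j => ?_, fun i j hj => ?_⟩, hrow, fun j => ?_, fun i => ?_⟩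
  · simpa only [Fin.tail, Fin.succ_castSucc] using hcol i.succ j
  · simpa only [Fin.tail, Fin.succ_castSucc] using hdiag i.succ j hj
  · simpa only [Fin.tail, Fin.succ_last] using htop j
  · simpa only [Fin.tail, Fin.succ_castSucc] using hsum i.succ

theorem isExtreme_row_one_eq (h : AddsBox mu' mu) (hw : w 0 = 1) :
    IsExtreme ℝ (gtPolytope (m + 1) n lam mu' w)
      {c ∈ gtPolytope (m + 1) n lam mu' w | ∀ j, c 1 j = mu j} := by
  refine ⟨Set.sep_subset _ _, fun a ha b hb c ⟨_, hc⟩ hcab => ⟨ha, ?_⟩⟩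
  obtain ⟨r, -, hne⟩ := id h
  refine congrFun (eq_of_forall_ne_of_sum_eq r (fun j hj => ?_) ?_)
  · have hge : ∀ d ∈ gtPolytope (m + 1) n lam mu' w, (mu j : ℝ) ≤ d 1 j :=
      fun d hd => by simpa [hne j hj] using mu_le_of_mem_gtPolytope hd 1 j
    exact (hc j).symm ▸ eq_of_mem_openSegment_of_ge (apply_apply_mem_openSegment hcab 1 j)
      (hc j ▸ hge a ha) (hc j ▸ hge b hb)
  · have hbot := sum_row_succ_of_mem_gtPolytope ha 0
    simp only [Fin.succ_zero_eq_one, Fin.castSucc_zero, ha.2.1, hw, Int.cast_one] at hbot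
    linarith [h.sum_eq]

theorem cons_row_mem_extremePoints (h : AddsBox mu' mu) (hmu : Antitone mu)
    (hmu' : Antitone mu') (hw : w 0 = 1) {x : Fin (m + 1) → Fin n → ℝ}
    (hx : x ∈ (gtPolytope m n lam mu fun i => w i.succ).extremePoints ℝ) :
    (Fin.cons (fun j => (mu' j : ℝ)) x : Fin (m + 2) → Fin n → ℝ) ∈
      (gtPolytope (m + 1) n lam mu' w).extremePoints ℝ := by
  refine mem_extremePoints_of_isExtreme_of_injOn (LinearMap.funLeft ℝ _ Fin.succ)
    (isExtreme_row_one_eq h hw) (fun c hc => tail_row_mem_gtPolytope hc.1 hc.2)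
    (fun a ha b hb hab => ?_)
    ⟨cons_row_mem_gtPolytope hx.1 h.le (h.succ_le hmu' hmu) ?_, ?_⟩ ?_
  · rw [← Fin.cons_self_tail a, ← Fin.cons_self_tail b]
    congr 1
    funext j
    rw [ha.1.2.1, hb.1.2.1]
  · rw [h.sum_eq, hw]; simp
  · intro j; simpa using hx.1.2.1 j
  · simpa [LinearMap.funLeft] using hx

end BottomRow

theorem statement8_general (n : ℕ) (lam mu : Fin n → ℤ)
    (hlam : Antitone lam) (hmu : Antitone mu)
    (hmu0 : ∀ j, 0 ≤ mu j) (hge : ∀ j, mu j ≤ lam j)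
    (N : ℕ)
    (hnonint : ∃ x ∈ Set.extremePoints ℝ (gtPolytope N n lam mu fun _ => 1),
      ∃ i j, ∀ z : ℤ, x i j ≠ (z : ℝ)) :
    (∀ lamp : Fin (n + 1) → ℤ, Antitone lamp → (∀ j, 0 ≤ lamp j) →
      (∃ r : Fin (n + 1), lamp r = (Fin.snoc lam 0 : Fin (n + 1) → ℤ) r + 1 ∧
        ∀ i, i ≠ r → lamp i = (Fin.snoc lam 0 : Fin (n + 1) → ℤ) i) →
      ∃ x ∈ Set.extremePoints ℝ
          (gtPolytope (N + 1) (n + 1) lamp (Fin.snoc mu 0) fun _ => 1),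
        ∃ i j, ∀ z : ℤ, x i j ≠ (z : ℝ)) ∧
    (∀ mum : Fin n → ℤ, Antitone mum → (∀ j, 0 ≤ mum j) →
      (∃ r : Fin n, mum r = mu r - 1 ∧ ∀ i, i ≠ r → mum i = mu i) →
      ∃ x ∈ Set.extremePoints ℝ (gtPolytope (N + 1) n lam mum fun _ => 1),
        ∃ i j, ∀ z : ℤ, x i j ≠ (z : ℝ)) := by
  obtain ⟨x, hx, i, j, hij⟩ := hnonint
  refine ⟨fun lamp hlamp _ hbox => ?_, fun mum hmum _ ⟨r, hr, hne⟩ => ?_⟩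
  · have hsnoc : Antitone (Fin.snoc lam 0 : Fin (n + 1) → ℤ) :=
      antitone_snoc hlam fun j => (hmu0 j).trans (hge j)
    refine ⟨_, snoc_row_mem_extremePoints hbox hsnoc hlamp rfl
      (snoc_zero_col_mem_extremePoints hmu0 hx), i.castSucc, j.castSucc, ?_⟩
    simpa using hij
  · have hbox : AddsBox mum mu := ⟨r, by omega, fun i hi => (hne i hi).symm⟩
    exact ⟨_, cons_row_mem_extremePoints hbox hmu hmum rfl hx, i.succ, j, by simpa using hij⟩

/-- If `P_{λ/μ,1}` has a non-integral extreme point, then (a) adding one box to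
`λ` (after padding `λ` and `μ` with a trailing zero) and (b) removing one box
from `μ` both yield polytopes (with weight `1` of length `|λ|-|μ|+1`) having a
non-integral extreme point. -/
theorem statement8 (n : ℕ) (hn : 1 ≤ n) (lam mu : Fin n → ℤ)
    (hlam : Antitone lam) (hmu : Antitone mu)
    (hmu0 : ∀ j, 0 ≤ mu j) (hge : ∀ j, mu j ≤ lam j)
    (N : ℕ) (hN : (N : ℤ) = ∑ j, lam j - ∑ j, mu j)
    (hnonint : ∃ x ∈ Set.extremePoints ℝ (gtPolytope N n lam mu fun _ => 1),
      ∃ i j, ∀ z : ℤ, x i j ≠ (z : ℝ)) :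
    (∀ lamp : Fin (n + 1) → ℤ, Antitone lamp → (∀ j, 0 ≤ lamp j) →
      (∃ r : Fin (n + 1), lamp r = (Fin.snoc lam 0 : Fin (n + 1) → ℤ) r + 1 ∧
        ∀ i, i ≠ r → lamp i = (Fin.snoc lam 0 : Fin (n + 1) → ℤ) i) →
      ∃ x ∈ Set.extremePoints ℝ
          (gtPolytope (N + 1) (n + 1) lamp (Fin.snoc mu 0) fun _ => 1),
        ∃ i j, ∀ z : ℤ, x i j ≠ (z : ℝ)) ∧
    (∀ mum : Fin n → ℤ, Antitone mum → (∀ j, 0 ≤ mum j) →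
      (∃ r : Fin n, mum r = mu r - 1 ∧ ∀ i, i ≠ r → mum i = mu i) →
      ∃ x ∈ Set.extremePoints ℝ (gtPolytope (N + 1) n lam mum fun _ => 1),
        ∃ i j, ∀ z : ℤ, x i j ≠ (z : ℝ)) :=
  statement8_general n lam mu hlam hmu hmu0 hge N hnonint
end

section
/- For every integer r ≥ 4, let λ = (3,2,1,1,…,1) ∈ ℤ^r and μ = (2,1,0,…,0) ∈ ℤ^r (so the skew shape λ/μ has exactly r boxes). Then the Gelfand–Tsetlin polytope P_{λ/μ,1} with weight 1 = (1,…,1) of length r has an extreme point with a non-integer entry. -/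
open Finset

/-!
The witness `X` agrees in each column with `μ` or `λ` except at six half-integral entries in
rows 1–3, among them `X₁₁ = 3/2`. Each integral entry is joined to row `0` or row `r` by vertical
GT inequalities tight at `X`, so a point `y` of the polytope that is tight wherever `X` is
(vertically, and on the diagonal inequality `y₂₃ ≤ y₁₂`) agrees with `X` outside the six cells
and has `y₁₂ = y₂₂ = y₂₃ = y₃₃`; the row sums of rows 1, 2, 3 then determine the rest. Being the
only point of the polytope tight on the constraints tight at it, `X` is extreme.
-/

section ExtremePoint

variable {E ι : Type*} [AddCommGroup E] [Module ℝ E]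

theorem mem_extremePoints_of_tight_determines {s : Set E} {x : E} (hx : x ∈ s)
    (f : ι → E →ₗ[ℝ] ℝ) (hf : ∀ k, ∀ y ∈ s, 0 ≤ f k y)
    (hdet : ∀ y ∈ s, (∀ k, f k x = 0 → f k y = 0) → y = x) :
    x ∈ s.extremePoints ℝ := by
  refine mem_extremePoints.2 ⟨hx, fun y hy z hz hxyz => ?_⟩
  obtain ⟨a, b, ha, hb, -, rfl⟩ := hxyz
  have htight : ∀ k, f k (a • y + b • z) = 0 → f k y = 0 ∧ f k z = 0 := by
    intro k hk
    rw [map_add, map_smul, map_smul, smul_eq_mul, smul_eq_mul] at hk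
    have hy' := hf k y hy
    have hz' := hf k z hz
    constructor <;> nlinarith [mul_nonneg ha.le hy', mul_nonneg hb.le hz']
  exact ⟨hdet y hy fun k hk => (htight k hk).1, hdet z hz fun k hk => (htight k hk).2⟩

end ExtremePoint

theorem Fin.apply_eq_apply_of_monotone_of_tight {α β : Type*} [PartialOrder α] {m : ℕ}
    {f : Fin (m + 1) → α} {g : Fin (m + 1) → β} (hf : Monotone f)
    (hfg : ∀ k : Fin m, f k.castSucc = f k.succ → g k.castSucc = g k.succ)
    ⦃i i' : Fin (m + 1)⦄ (hii' : i ≤ i') (h : f i = f i') : g i = g i' := by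
  induction i' using Fin.induction with
  | zero => rw [Fin.le_zero_iff.1 hii']
  | succ k ih =>
    rcases hii'.eq_or_lt with rfl | hlt
    · rfl
    have hik : i ≤ k.castSucc := Fin.le_castSucc_iff.2 hlt
    have hfk : f k.castSucc = f k.succ :=
      le_antisymm (hf (Fin.castSucc_le_succ k)) (h ▸ hf hik)
    exact (ih hik (h.trans hfk.symm)).trans (hfg k hfk)

section GTPolytope

variable {m n : ℕ} {lam mu : Fin n → ℤ} {w : Fin m → ℤ} {x y : Fin (m + 1) → Fin n → ℝ}

theorem IsGTPattern.monotone_column (hx : IsGTPattern m n x) (j : Fin n) :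
    Monotone fun i => x i j :=
  Fin.monotone_iff_le_succ.2 fun i => hx.1 i j

theorem sum_row_eq_of_mem_gtPolytope (hx : x ∈ gtPolytope m n lam mu w)
    (hy : y ∈ gtPolytope m n lam mu w) (i : Fin (m + 1)) : ∑ j, x i j = ∑ j, y i j := by
  induction i using Fin.induction with
  | zero => simp only [hx.2.1, hy.2.1]
  | succ i ih => linarith [hx.2.2.2 i, hy.2.2.2 i]

theorem apply_eq_of_mem_gtPolytope_of_tight (hx : x ∈ gtPolytope m n lam mu w)
    (hy : y ∈ gtPolytope m n lam mu w)
    (htight : ∀ (i : Fin m) j, x i.castSucc j = x i.succ j → y i.castSucc j = y i.succ j)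
    {i : Fin (m + 1)} {j : Fin n} (h : x i j = x 0 j ∨ x i j = x (Fin.last m) j) :
    y i j = x i j := by
  have hcol := Fin.apply_eq_apply_of_monotone_of_tight (g := fun i => y i j)
    (hx.1.monotone_column j) (fun k => htight k j)
  rcases h with h | h
  · rw [← hcol (Fin.zero_le i) h.symm, hy.2.1, ← hx.2.1, h]
  · rw [hcol (Fin.le_last i) h, hy.2.2.1, ← hx.2.2.1, h]

theorem sub_add_sub_eq_zero_of_mem_gtPolytope (hx : x ∈ gtPolytope m n lam mu w)
    (hy : y ∈ gtPolytope m n lam mu w) {i : Fin (m + 1)} {a b : Fin n} (hab : a ≠ b)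
    (h : ∀ j, j ≠ a → j ≠ b → y i j = x i j) : (y i a - x i a) + (y i b - x i b) = 0 := by
  rw [← Fintype.sum_eq_add a b hab fun j hj => sub_eq_zero.2 (h j hj.1 hj.2), sum_sub_distrib,
    sum_row_eq_of_mem_gtPolytope hy hx, sub_self]

end GTPolytope

noncomputable def halfPoint : ℕ → ℕ → ℝ
  | i, 0 => if i ≤ 2 then 2 else if i = 3 then 5 / 2 else 3
  | i, 1 => if i = 0 then 1 else if i = 1 then 3 / 2 else 2
  | i, 2 => if i = 0 then 0 else if i ≤ 2 then 1 / 2 else 1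
  | i, 3 => if i ≤ 1 then 0 else if i ≤ 3 then 1 / 2 else 1
  | i, j + 4 => if i ≤ j + 4 then 0 else 1

noncomputable def halfPattern (r : ℕ) : Fin (r + 1) → Fin r → ℝ := fun i j => halfPoint i j

def skewPolytope (r : ℕ) : Set (Fin (r + 1) → Fin r → ℝ) :=
  gtPolytope r r (fun i : Fin r => if (i : ℕ) = 0 then 3 else if (i : ℕ) = 1 then 2 else 1)
    (fun i : Fin r => if (i : ℕ) = 0 then 2 else if (i : ℕ) = 1 then 1 else 0) fun _ => 1

def IsHalfCell (i j : ℕ) : Prop :=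
  i = 1 ∧ (j = 1 ∨ j = 2) ∨ i = 2 ∧ (j = 2 ∨ j = 3) ∨ i = 3 ∧ (j = 0 ∨ j = 3)

theorem halfPoint_le_succ_left (i j : ℕ) : halfPoint i j ≤ halfPoint (i + 1) j := by
  rcases j with _ | _ | _ | _ | j <;> simp only [halfPoint] <;> split_ifs <;> norm_num <;> omega

theorem halfPoint_succ_succ_le (i j : ℕ) : halfPoint (i + 1) (j + 1) ≤ halfPoint i j := by
  rcases j with _ | _ | _ | _ | j <;> simp only [halfPoint] <;> split_ifs <;> norm_num <;> omega

theorem halfPoint_zero_left (j : ℕ) :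
    halfPoint 0 j = if j = 0 then 2 else if j = 1 then 1 else 0 := by
  rcases j with _ | _ | _ | _ | j <;> simp [halfPoint]

theorem halfPoint_of_lt {i j : ℕ} (hi : 4 ≤ i) (hj : j < i) :
    halfPoint i j = if j = 0 then 3 else if j = 1 then 2 else 1 := by
  rcases j with _ | _ | _ | _ | j <;> simp only [halfPoint] <;> split_ifs <;> norm_num <;> omega

theorem halfPoint_of_le {i j : ℕ} (hj : 4 ≤ j) (hij : i ≤ j) : halfPoint i j = 0 := by
  obtain ⟨k, rfl⟩ := Nat.exists_eq_add_of_le' hj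
  simp [halfPoint, hij]

theorem sum_range_halfPoint_succ_sub {r i : ℕ} (hr : 4 ≤ r) (hi : i < r) :
    ∑ j ∈ range r, (halfPoint (i + 1) j - halfPoint i j) = 1 := by
  rcases lt_or_ge i 4 with hi4 | hi4
  · obtain ⟨k, rfl⟩ := Nat.exists_eq_add_of_le hr
    rw [sum_range_add, sum_eq_zero (s := range k) fun j _ => by
      rw [halfPoint_of_le (by omega) (by omega), halfPoint_of_le (by omega) (by omega), sub_zero]]
    interval_cases i <;> norm_num [sum_range_succ, halfPoint]
  · rw [sum_eq_single i (fun j _ hji => ?_) (by simp [hi])]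
    · obtain ⟨k, rfl⟩ := Nat.exists_eq_add_of_le' hi4
      simp [halfPoint]
    · rcases j with _ | _ | _ | _ | j <;> simp only [halfPoint] <;> split_ifs <;> norm_num <;> omega

theorem halfPattern_mem_skewPolytope {r : ℕ} (hr : 4 ≤ r) : halfPattern r ∈ skewPolytope r := by
  refine ⟨⟨fun i j => halfPoint_le_succ_left i j, fun i j _ => halfPoint_succ_succ_le i j⟩,
    fun j => ?_, fun j => ?_, fun i => ?_⟩
  · simp only [halfPattern, Fin.val_zero, halfPoint_zero_left]
    split_ifs <;> norm_num
  · simp only [halfPattern, Fin.val_last, halfPoint_of_lt hr j.2]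
    split_ifs <;> norm_num
  · simp only [halfPattern, Fin.val_succ, Fin.val_castSucc, ← sum_sub_distrib]
    rw [Fin.sum_univ_eq_sum_range (fun j => halfPoint (i + 1) j - halfPoint i j),
      sum_range_halfPoint_succ_sub hr i.2]
    norm_num

theorem halfPoint_eq_bottom_or_top {r i j : ℕ} (hr : 4 ≤ r) (hj : j < r) (h : ¬IsHalfCell i j) :
    halfPoint i j = halfPoint 0 j ∨ halfPoint i j = halfPoint r j := by
  unfold IsHalfCell at h
  rcases j with _ | _ | _ | _ | j <;> simp only [halfPoint] <;> split_ifs <;> norm_num <;> omega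

theorem eq_halfPattern_of_tight {r : ℕ} (hr : 4 ≤ r) {y : Fin (r + 1) → Fin r → ℝ}
    (hy : y ∈ skewPolytope r)
    (htight : ∀ (i : Fin r) j, halfPattern r i.castSucc j = halfPattern r i.succ j →
      y i.castSucc j = y i.succ j)
    (hdiag : y ⟨2, by omega⟩ ⟨3, by omega⟩ = y ⟨1, by omega⟩ ⟨2, by omega⟩) :
    y = halfPattern r := by
  have hX := halfPattern_mem_skewPolytope hr
  have hfix (i : Fin (r + 1)) (j : Fin r) (h : ¬IsHalfCell i j) : y i j = halfPattern r i j :=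
    apply_eq_of_mem_gtPolytope_of_tight hX hy htight <| by
      simpa [halfPattern] using halfPoint_eq_bottom_or_top hr j.2 h
  have hrow (i : Fin (r + 1)) (a b : Fin r) (hab : a ≠ b)
      (hcells : ∀ j : Fin r, IsHalfCell i j → j = a ∨ j = b) :=
    sub_add_sub_eq_zero_of_mem_gtPolytope hX hy hab fun j ha hb =>
      hfix i j fun hj => (hcells j hj).elim ha hb
  have hrow1 := hrow ⟨1, by omega⟩ ⟨1, by omega⟩ ⟨2, by omega⟩ (by simp) fun j hj => by
    simp only [IsHalfCell, Fin.ext_iff] at hj ⊢; omega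
  have hrow2 := hrow ⟨2, by omega⟩ ⟨2, by omega⟩ ⟨3, by omega⟩ (by simp) fun j hj => by
    simp only [IsHalfCell, Fin.ext_iff] at hj ⊢; omega
  have hrow3 := hrow ⟨3, by omega⟩ ⟨0, by omega⟩ ⟨3, by omega⟩ (by simp) fun j hj => by
    simp only [IsHalfCell, Fin.ext_iff] at hj ⊢; omega
  have hcol2 := htight ⟨1, by omega⟩ ⟨2, by omega⟩ (by norm_num [halfPattern, halfPoint])
  have hcol3 := htight ⟨2, by omega⟩ ⟨3, by omega⟩ (by norm_num [halfPattern, halfPoint])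
  simp only [Fin.castSucc_mk, Fin.succ_mk, Nat.reduceAdd] at hcol2 hcol3
  norm_num [halfPattern, halfPoint] at hrow1 hrow2 hrow3
  funext ⟨i, hi⟩ ⟨j, hj⟩
  by_cases h : IsHalfCell i j
  · rcases h with ⟨rfl, rfl | rfl⟩ | ⟨rfl, rfl | rfl⟩ | ⟨rfl, rfl | rfl⟩ <;>
      norm_num [halfPattern, halfPoint] <;> linarith
  · exact hfix _ _ h

theorem halfPattern_mem_extremePoints {r : ℕ} (hr : 4 ≤ r) :
    halfPattern r ∈ (skewPolytope r).extremePoints ℝ := by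
  let entry (p : Fin (r + 1) × Fin r) : (Fin (r + 1) → Fin r → ℝ) →ₗ[ℝ] ℝ :=
    LinearMap.proj p.2 ∘ₗ LinearMap.proj (φ := fun _ => Fin r → ℝ) p.1
  let f : Option (Fin r × Fin r) → (Fin (r + 1) → Fin r → ℝ) →ₗ[ℝ] ℝ
    | some (i, j) => entry (i.succ, j) - entry (i.castSucc, j)
    | none => entry (⟨1, by omega⟩, ⟨2, by omega⟩) - entry (⟨2, by omega⟩, ⟨3, by omega⟩)
  refine mem_extremePoints_of_tight_determines (halfPattern_mem_skewPolytope hr) f ?_ ?_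
  · rintro (_ | ⟨i, j⟩) y hy <;>
      simp only [f, entry, LinearMap.sub_apply, LinearMap.comp_apply, LinearMap.proj_apply,
        sub_nonneg]
    · exact hy.1.2 ⟨1, by omega⟩ ⟨2, by omega⟩ (by simp only; omega)
    · exact hy.1.1 i j
  · intro y hy hdet
    simp only [f, entry, LinearMap.sub_apply, LinearMap.comp_apply, LinearMap.proj_apply,
      sub_eq_zero, Option.forall] at hdet
    refine eq_halfPattern_of_tight hr hy (fun i j h => (hdet.2 (i, j) h.symm).symm) ?_
    exact (hdet.1 (by norm_num [halfPattern, halfPoint])).symm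

theorem three_halves_ne_intCast (z : ℤ) : (3 / 2 : ℝ) ≠ z := by
  intro h
  have h2 : ((2 * z : ℤ) : ℝ) = 3 := by push_cast; linarith
  have : 2 * z = 3 := by exact_mod_cast h2
  omega

/-- For every `r ≥ 4`, the skew shape `λ/μ` with `λ = (3,2,1,…,1) ∈ ℤ^r` and
`μ = (2,1,0,…,0) ∈ ℤ^r` (which has `r` boxes) gives a GT-polytope with weight
`1 = (1,…,1)` of length `r` having an extreme point with a non-integer
entry. -/
theorem statement11 (r : ℕ) (hr : 4 ≤ r) :
    ∃ x ∈ Set.extremePoints ℝ (gtPolytope r r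
        (fun i : Fin r => if (i : ℕ) = 0 then 3 else if (i : ℕ) = 1 then 2 else 1)
        (fun i : Fin r => if (i : ℕ) = 0 then 2 else if (i : ℕ) = 1 then 1 else 0)
        fun _ => 1),
      ∃ i j, ∀ z : ℤ, x i j ≠ (z : ℝ) :=
  ⟨halfPattern r, halfPattern_mem_extremePoints hr, ⟨1, by omega⟩, ⟨1, by omega⟩, fun z => by
    simpa [halfPattern, halfPoint] using three_halves_ne_intCast z⟩
end

section
/- Let λ/μ be a skew diagram (λ, μ weakly decreasing nonnegative integer vectors of length n with λ ≥ μ) with no empty rows (λ_i > μ_i for all i) and no empty columns (for every 1 ≤ c ≤ λ_1 there is an i with μ_i < c ≤ λ_i). Suppose λ/μ does not contain, as a subdiagram, any of the following skew shapes: (3,2)/(1,0), (2,2,1)/(1,0,0), (3,2,1)/(2,0,0), (3,2,1)/(1,1,0), (3,2,2)/(2,1,0), (3,3,1)/(2,1,0), (2,2,1,1)/(1,1,0,0), nor any shape (with r ≥ 4 parts, hence ≥ 4 boxes) of the three families (3,2,1,…,1)/(2,1,0,…,0), (3,2,…,2,1)/(2,1,…,1,0), (3,…,3,2,1)/(2,…,2,1,0).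 Then λ/μ is one of: (a) a disjoint union of rows (μ_i ≥ λ_{i+1} for all 1 ≤ i < n); (b) the 2×2-box, i.e., n = 2, λ = (2,2), μ = (0,0); (c) a hook λ = (h,1,…,1) with μ = (0,…,0), or a hook with its corner box missing, λ = (h,1,…,1) with μ = (1,0,…,0); (d) a reverse hook λ = (h,…,h) with μ = (h−1,…,h−1,0), or a reverse hook with its corner box missing, λ = (h,…,h,h−1) with μ = (h−1,…,h−1,0). -/
/-!
Read row `i` of `λ/μ` as the interval of columns `(μ i, λ i]`. Having no empty columns means
that consecutive rows overlap or touch, `μ i ≤ λ (i + 1)`, and that `μ (n - 1) = 0`. If no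
consecutive rows overlap, `λ/μ` is a disjoint union of rows. An overlap of two or more columns
is, by `(3,2)/(1,0)`, a 2×2 block, and the three-row shapes leave no room for a row above or
below it. Otherwise every consecutive pair is *glued* (`λ (p + 1) = μ p + 1`) or *split*
(`λ (p + 1) = μ p`). The families `(3,2,1,…)/(2,1,0,…)`, `(3,2,…,2,1)/(2,1,…,1,0)` and
`(3,…,3,2,1)/(2,…,2,1,0)` exclude one glued and two split pairs in each relative order, so once
a pair is glued at most one pair is split, and by `(2,2,1,1)/(1,1,0,0)` it is the first or the
last one. A run of glued pairs has constant `μ` by `(2,2,1)/(1,0,0)`, and the remaining small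
shapes pin down the two ends of the diagram: a hook or a reverse hook, with or without its
corner box.
-/

open Finset

/-- Box `(i,j)` belongs to the skew diagram `λ/μ`. -/
def InDiagram {n : ℕ} (lam mu : Fin n → ℤ) (i : Fin n) (j : ℤ) : Prop :=
  mu i < j ∧ j ≤ lam i

/-- The skew shape `α/β` is a subdiagram of `λ/μ`: there are strictly
increasing row and column maps embedding the boxes of `α/β` into the boxes of
`λ/μ`. -/
def ContainsSub {n n' : ℕ} (lam mu : Fin n → ℤ) (alpha beta : Fin n' → ℤ) : Prop :=
  ∃ r : Fin n' → Fin n, StrictMono r ∧ ∃ c : ℤ → ℤ, StrictMono c ∧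
    ∀ (i : Fin n') (j : ℤ), InDiagram alpha beta i j → InDiagram lam mu (r i) (c j)

open Function

theorem Fin.apply_mk_eq_extend {α : Type*} [Zero α] {n : ℕ} (f : Fin n → α) {i : ℕ}
    (hi : i < n) : f ⟨i, hi⟩ = extend Fin.val f 0 i :=
  (Fin.val_injective.extend_apply f 0 ⟨i, hi⟩).symm

theorem Fin.extend_val_of_le {α : Type*} [Zero α] {n : ℕ} (f : Fin n → α) {i : ℕ}
    (hi : n ≤ i) : extend Fin.val f 0 i = 0 :=
  extend_apply' _ _ _ fun ⟨j, hj⟩ => by omega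

theorem Fin.antitone_extend_val {α : Type*} [Preorder α] [Zero α] {n : ℕ} {f : Fin n → α}
    (hf : Antitone f) (h0 : ∀ i, 0 ≤ f i) : Antitone (extend Fin.val f 0) := by
  intro a b hab
  by_cases hb : b < n
  · rw [← Fin.apply_mk_eq_extend f hb, ← Fin.apply_mk_eq_extend f (hab.trans_lt hb)]
    exact hf (Fin.mk_le_mk.2 hab)
  · rw [Fin.extend_val_of_le f (not_lt.1 hb)]
    by_cases ha : a < n
    · rw [← Fin.apply_mk_eq_extend f ha]
      exact h0 _
    · rw [Fin.extend_val_of_le f (not_lt.1 ha)]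

def colMap (x y z : ℤ) (t : ℤ) : ℤ :=
  if t ≤ 1 then x + (t - 1) else if t = 2 then y else z + (t - 3)

theorem colMap_strictMono {x y z : ℤ} (hxy : x < y) (hyz : y < z) :
    StrictMono (colMap x y z) := by
  intro a b hab
  unfold colMap
  split_ifs <;> omega

@[simp] theorem colMap_one (x y z : ℤ) : colMap x y z 1 = x := by simp [colMap]
@[simp] theorem colMap_two (x y z : ℤ) : colMap x y z 2 = y := by simp [colMap]
@[simp] theorem colMap_three (x y z : ℤ) : colMap x y z 3 = z := by simp [colMap]

/-- Row `i` occupies the columns `mu i < j ≤ lam i`; the last two fields are what "no empty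
columns" amounts to. -/
structure IsSkewShape (n : ℕ) (lam mu : ℕ → ℤ) : Prop where
  antitone_lam : Antitone lam
  antitone_mu : Antitone mu
  mu_lt_lam : ∀ i < n, mu i < lam i
  mu_le_lam_succ : ∀ i, i + 1 < n → mu i ≤ lam (i + 1)
  mu_last : mu (n - 1) = 0

def Covers {n : ℕ} (lam mu : Fin n → ℤ) (i : ℕ) (y z : ℤ) : Prop :=
  extend Fin.val mu 0 i < y ∧ z ≤ extend Fin.val lam 0 i

def IsDisjointRows {n : ℕ} (lam mu : Fin n → ℤ) : Prop :=
  ∀ i : Fin n, ∀ h : (i : ℕ) + 1 < n, lam ⟨(i : ℕ) + 1, h⟩ ≤ mu i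

def IsTwoByTwoBox {n : ℕ} (lam mu : Fin n → ℤ) : Prop :=
  n = 2 ∧ (∀ i, lam i = 2) ∧ (∀ i, mu i = 0)

def IsHookLike {n : ℕ} (lam mu : Fin n → ℤ) : Prop :=
  ∃ h : ℤ, 1 ≤ h ∧ (∀ i : Fin n, lam i = if (i : ℕ) = 0 then h else 1) ∧
    ((∀ i, mu i = 0) ∨ (∀ i : Fin n, mu i = if (i : ℕ) = 0 then 1 else 0))

def IsReverseHookLike {n : ℕ} (lam mu : Fin n → ℤ) : Prop :=
  ∃ h : ℤ, ((∀ i, lam i = h) ∨ (∀ i : Fin n, lam i = if (i : ℕ) + 1 = n then h - 1 else h)) ∧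
    (∀ i : Fin n, mu i = if (i : ℕ) + 1 = n then 0 else h - 1)

section

variable {n : ℕ} {lam mu : Fin n → ℤ}

-- Rows are indexed by `ℕ`, those from `n` on being empty.
local notation "L" => extend Fin.val lam 0
local notation "M" => extend Fin.val mu 0

theorem Covers.lt {i : ℕ} {y z : ℤ} (h : Covers lam mu i y z) (hyz : y ≤ z) : i < n := by
  by_contra! hi
  have := h.1.trans_le (hyz.trans h.2)
  simp only [Fin.extend_val_of_le _ hi, lt_self_iff_false] at this

theorem containsSub_of_covers {k : ℕ} {alpha beta : Fin k → ℤ} (hab : ∀ i, beta i < alpha i)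
    {r : Fin k → ℕ} (hr : StrictMono r) {c : ℤ → ℤ} (hc : StrictMono c)
    (hcov : ∀ i, Covers lam mu (r i) (c (beta i + 1)) (c (alpha i))) :
    ContainsSub lam mu alpha beta := by
  have hrn i : r i < n := (hcov i).lt (hc.monotone (by linarith [hab i]))
  refine ⟨fun i => ⟨r i, hrn i⟩, fun i j hij => hr hij, c, hc, fun i j ⟨hj1, hj2⟩ => ?_⟩
  obtain ⟨h1, h2⟩ := hcov i
  rw [← Fin.apply_mk_eq_extend _ (hrn i)] at h1 h2
  exact ⟨h1.trans_le (hc.monotone (by omega)), (hc.monotone hj2).trans h2⟩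

-- `no_α_β`: rows `a < b < ⋯` cannot contain the boxes of the rows of `α/β`, with its columns
-- `1, 2, 3` moved to `x < y < z`.
theorem no_32_10 (h : ¬ ContainsSub lam mu ![3, 2] ![1, 0]) {a b : ℕ} (hab : a < b)
    {x y z : ℤ} (hxy : x < y) (hyz : y < z)
    (ha : Covers lam mu a y z) (hb : Covers lam mu b x y) : False := by
  refine h (containsSub_of_covers (by decide) (r := ![a, b]) (by simp [*])
    (colMap_strictMono hxy hyz) fun i => ?_)
  fin_cases i <;> simpa

theorem no_221_100 (h : ¬ ContainsSub lam mu ![2, 2, 1] ![1, 0, 0]) {a b c : ℕ}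
    (hab : a < b) (hbc : b < c) {x y : ℤ} (hxy : x < y)
    (ha : Covers lam mu a y y) (hb : Covers lam mu b x y)
    (hc : Covers lam mu c x x) : False := by
  refine h (containsSub_of_covers (by decide) (r := ![a, b, c]) (by simp [*])
    (colMap_strictMono hxy (lt_add_one y)) fun i => ?_)
  fin_cases i <;> simpa

theorem no_321_200 (h : ¬ ContainsSub lam mu ![3, 2, 1] ![2, 0, 0]) {a b c : ℕ}
    (hab : a < b) (hbc : b < c) {x y z : ℤ} (hxy : x < y) (hyz : y < z)
    (ha : Covers lam mu a z z) (hb : Covers lam mu b x y)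
    (hc : Covers lam mu c x x) : False := by
  refine h (containsSub_of_covers (by decide) (r := ![a, b, c]) (by simp [*])
    (colMap_strictMono hxy hyz) fun i => ?_)
  fin_cases i <;> simpa

theorem no_321_110 (h : ¬ ContainsSub lam mu ![3, 2, 1] ![1, 1, 0]) {a b c : ℕ}
    (hab : a < b) (hbc : b < c) {x y z : ℤ} (hxy : x < y) (hyz : y < z)
    (ha : Covers lam mu a y z) (hb : Covers lam mu b y y)
    (hc : Covers lam mu c x x) : False := by
  refine h (containsSub_of_covers (by decide) (r := ![a, b, c]) (by simp [*])
    (colMap_strictMono hxy hyz) fun i => ?_)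
  fin_cases i <;> simpa

theorem no_322_210 (h : ¬ ContainsSub lam mu ![3, 2, 2] ![2, 1, 0]) {a b c : ℕ}
    (hab : a < b) (hbc : b < c) {x y z : ℤ} (hxy : x < y) (hyz : y < z)
    (ha : Covers lam mu a z z) (hb : Covers lam mu b y y)
    (hc : Covers lam mu c x y) : False := by
  refine h (containsSub_of_covers (by decide) (r := ![a, b, c]) (by simp [*])
    (colMap_strictMono hxy hyz) fun i => ?_)
  fin_cases i <;> simpa

theorem no_331_210 (h : ¬ ContainsSub lam mu ![3, 3, 1] ![2, 1, 0]) {a b c : ℕ}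
    (hab : a < b) (hbc : b < c) {x y z : ℤ} (hxy : x < y) (hyz : y < z)
    (ha : Covers lam mu a z z) (hb : Covers lam mu b y z)
    (hc : Covers lam mu c x x) : False := by
  refine h (containsSub_of_covers (by decide) (r := ![a, b, c]) (by simp [*])
    (colMap_strictMono hxy hyz) fun i => ?_)
  fin_cases i <;> simpa

theorem no_2211_1100 (h : ¬ ContainsSub lam mu ![2, 2, 1, 1] ![1, 1, 0, 0]) {a b c d : ℕ}
    (hab : a < b) (hbc : b < c) (hcd : c < d) {x y : ℤ} (hxy : x < y)
    (ha : Covers lam mu a y y) (hb : Covers lam mu b y y) (hc : Covers lam mu c x x)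
    (hd : Covers lam mu d x x) : False := by
  refine h (containsSub_of_covers (by decide) (r := ![a, b, c, d]) (by simp [*])
    (colMap_strictMono hxy (lt_add_one y)) fun i => ?_)
  fin_cases i <;> simpa

theorem no_3211_2100 (h : ¬ ContainsSub lam mu ![3, 2, 1, 1] ![2, 1, 0, 0]) {a b c d : ℕ}
    (hab : a < b) (hbc : b < c) (hcd : c < d) {x y z : ℤ} (hxy : x < y) (hyz : y < z)
    (ha : Covers lam mu a z z) (hb : Covers lam mu b y y)
    (hc : Covers lam mu c x x) (hd : Covers lam mu d x x) : False := by
  refine h (containsSub_of_covers (by decide) (r := ![a, b, c, d]) (by simp [*])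
    (colMap_strictMono hxy hyz) fun i => ?_)
  fin_cases i <;> simpa

theorem no_3221_2110 (h : ¬ ContainsSub lam mu ![3, 2, 2, 1] ![2, 1, 1, 0]) {a b c d : ℕ}
    (hab : a < b) (hbc : b < c) (hcd : c < d) {x y z : ℤ} (hxy : x < y) (hyz : y < z)
    (ha : Covers lam mu a z z) (hb : Covers lam mu b y y)
    (hc : Covers lam mu c y y) (hd : Covers lam mu d x x) : False := by
  refine h (containsSub_of_covers (by decide) (r := ![a, b, c, d]) (by simp [*])
    (colMap_strictMono hxy hyz) fun i => ?_)
  fin_cases i <;> simpa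

theorem no_3321_2210 (h : ¬ ContainsSub lam mu ![3, 3, 2, 1] ![2, 2, 1, 0]) {a b c d : ℕ}
    (hab : a < b) (hbc : b < c) (hcd : c < d) {x y z : ℤ} (hxy : x < y) (hyz : y < z)
    (ha : Covers lam mu a z z) (hb : Covers lam mu b z z)
    (hc : Covers lam mu c y y) (hd : Covers lam mu d x x) : False := by
  refine h (containsSub_of_covers (by decide) (r := ![a, b, c, d]) (by simp [*])
    (colMap_strictMono hxy hyz) fun i => ?_)
  fin_cases i <;> simpa

theorem isSkewShape_extend (hn : 1 ≤ n) (hlam : Antitone lam) (hmu : Antitone mu)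
    (hmu0 : ∀ j, 0 ≤ mu j) (hrows : ∀ i, mu i < lam i)
    (hcols : ∀ c : ℤ, 1 ≤ c → c ≤ lam ⟨0, hn⟩ → ∃ i, mu i < c ∧ c ≤ lam i) :
    IsSkewShape n L M := by
  have hL : Antitone L :=
    Fin.antitone_extend_val hlam fun i => (hmu0 i).trans (hrows i).le
  have hM : Antitone M := Fin.antitone_extend_val hmu hmu0
  have hrow : ∀ i < n, M i < L i := fun i hi => by
    simpa only [Fin.apply_mk_eq_extend] using hrows ⟨i, hi⟩
  have hcol : ∀ c, 1 ≤ c → c ≤ L 0 → ∃ i < n, M i < c ∧ c ≤ L i := fun c hc hcL => by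
    obtain ⟨⟨i, hi⟩, hic⟩ := hcols c hc (by rwa [Fin.apply_mk_eq_extend lam])
    exact ⟨i, hi, by simpa only [Fin.apply_mk_eq_extend] using hic⟩
  have hM0 : 0 ≤ M (n - 1) := by
    rw [← Fin.apply_mk_eq_extend mu (show n - 1 < n by omega)]
    exact hmu0 _
  refine ⟨hL, hM, hrow, fun i hi => ?_, ?_⟩
  · -- the column `M i` is covered by a row below row `i`
    by_contra! hlt
    have := hrow (i + 1) hi
    have := hM (show i + 1 ≤ n - 1 by omega)
    have := hL (Nat.zero_le i)
    have := hrow i (by omega)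
    obtain ⟨j, -, hj1, hj2⟩ := hcol (M i) (by omega) (by omega)
    rcases le_or_gt j i with hji | hji
    · have := hM hji; omega
    · have := hL (show i + 1 ≤ j by omega); omega
  · have := hrow 0 (by omega)
    have := hM (Nat.zero_le (n - 1))
    obtain ⟨j, hj, hj1, -⟩ := hcol 1 le_rfl (by omega)
    have := hM (show j ≤ n - 1 by omega)
    omega

theorem mu_succ_eq_of_glued (S : IsSkewShape n L M)
    (h : ¬ ContainsSub lam mu ![2, 2, 1] ![1, 0, 0]) {i : ℕ}
    (hi : L (i + 1) = M i + 1) (hi' : L (i + 2) = M (i + 1) + 1) : M (i + 1) = M i := by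
  have := S.antitone_mu (show i ≤ i + 1 by omega)
  have := S.antitone_mu (show i + 1 ≤ i + 2 by omega)
  have := S.antitone_lam (show i ≤ i + 1 by omega)
  by_contra hne
  exact no_221_100 h (show i < i + 1 by omega) (show i + 1 < i + 2 by omega)
    (x := M (i + 1) + 1) (y := M i + 1) (by omega)
    ⟨by omega, by omega⟩ ⟨by omega, by omega⟩ ⟨by omega, by omega⟩

theorem mu_eq_of_glued_run (S : IsSkewShape n L M)
    (h : ¬ ContainsSub lam mu ![2, 2, 1] ![1, 0, 0]) {a b : ℕ}
    (hg : ∀ i, a ≤ i → i ≤ b → L (i + 1) = M i + 1) : ∀ i, a ≤ i → i ≤ b → M i = M a := by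
  intro i hai
  induction i, hai using Nat.le_induction with
  | base => exact fun _ => rfl
  | succ i hai ih =>
    intro hib
    rw [mu_succ_eq_of_glued S h (hg i hai (by omega)) (hg (i + 1) (by omega) hib)]
    exact ih (by omega)

theorem false_of_glued_split_glued (S : IsSkewShape n L M)
    (h : ¬ ContainsSub lam mu ![2, 2, 1, 1] ![1, 1, 0, 0]) {q s p : ℕ} (hqs : q < s) (hsp : s < p)
    (hq : L (q + 1) = M q + 1) (hs : L (s + 1) = M s) (hp : L (p + 1) = M p + 1) : False := by
  have := S.antitone_lam (show q ≤ q + 1 by omega)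
  have := S.antitone_mu (show q ≤ q + 1 by omega)
  have := S.antitone_lam (show p ≤ p + 1 by omega)
  have := S.antitone_mu (show p ≤ p + 1 by omega)
  have := S.antitone_lam (show s + 1 ≤ p + 1 by omega)
  have := S.antitone_mu (show q ≤ s by omega)
  exact no_2211_1100 h (show q < q + 1 by omega) (show q + 1 < p by omega)
    (show p < p + 1 by omega) (x := M p + 1) (y := M q + 1) (by omega)
    ⟨by omega, by omega⟩ ⟨by omega, by omega⟩ ⟨by omega, by omega⟩ ⟨by omega, by omega⟩

theorem false_of_split_split_glued (S : IsSkewShape n L M)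
    (h : ¬ ContainsSub lam mu ![3, 2, 1, 1] ![2, 1, 0, 0]) {s t p : ℕ} (hst : s < t) (htp : t < p)
    (hpn : p + 1 < n) (hs : L (s + 1) = M s) (ht : L (t + 1) = M t)
    (hp : L (p + 1) = M p + 1) : False := by
  have := S.mu_lt_lam s (by omega)
  have := S.mu_lt_lam t (by omega)
  have := S.antitone_lam (show p ≤ p + 1 by omega)
  have := S.antitone_mu (show p ≤ p + 1 by omega)
  have := S.antitone_lam (show t + 1 ≤ p + 1 by omega)
  have := S.antitone_lam (show s + 1 ≤ t by omega)
  exact no_3211_2100 h hst htp (show p < p + 1 by omega)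
    (x := M p + 1) (y := L t) (z := L s) (by omega) (by omega)
    ⟨by omega, le_rfl⟩ ⟨by omega, le_rfl⟩ ⟨by omega, by omega⟩ ⟨by omega, by omega⟩

theorem false_of_split_glued_split (S : IsSkewShape n L M)
    (h : ¬ ContainsSub lam mu ![3, 2, 2, 1] ![2, 1, 1, 0]) {s p t : ℕ} (hsp : s < p) (hpt : p < t)
    (htn : t + 1 < n) (hs : L (s + 1) = M s) (hp : L (p + 1) = M p + 1)
    (ht : L (t + 1) = M t) : False := by
  have := S.mu_lt_lam s (by omega)
  have := S.mu_lt_lam (p + 1) (by omega)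
  have := S.mu_lt_lam (t + 1) htn
  have := S.antitone_lam (show p ≤ p + 1 by omega)
  have := S.antitone_mu (show p ≤ p + 1 by omega)
  have := S.antitone_lam (show s + 1 ≤ p + 1 by omega)
  have := S.antitone_mu (show p + 1 ≤ t by omega)
  exact no_3221_2110 h hsp (show p < p + 1 by omega) (show p + 1 < t + 1 by omega)
    (x := M t) (y := M p + 1) (z := L s) (by omega) (by omega)
    ⟨by omega, le_rfl⟩ ⟨by omega, by omega⟩ ⟨by omega, by omega⟩ ⟨by omega, by omega⟩

theorem false_of_glued_split_split (S : IsSkewShape n L M)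
    (h : ¬ ContainsSub lam mu ![3, 3, 2, 1] ![2, 2, 1, 0]) {p s t : ℕ} (hps : p < s) (hst : s < t)
    (htn : t + 1 < n) (hp : L (p + 1) = M p + 1) (hs : L (s + 1) = M s)
    (ht : L (t + 1) = M t) : False := by
  have := S.mu_lt_lam (p + 1) (by omega)
  have := S.mu_lt_lam (s + 1) (by omega)
  have := S.mu_lt_lam (t + 1) htn
  have := S.antitone_lam (show p ≤ p + 1 by omega)
  have := S.antitone_mu (show p ≤ p + 1 by omega)
  have := S.antitone_mu (show p + 1 ≤ s by omega)
  have := S.antitone_mu (show s + 1 ≤ t by omega)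
  exact no_3321_2210 h (show p < p + 1 by omega) (show p + 1 < s + 1 by omega)
    (show s + 1 < t + 1 by omega) (x := M t) (y := M s) (z := M p + 1) (by omega) (by omega)
    ⟨by omega, by omega⟩ ⟨by omega, by omega⟩ ⟨by omega, by omega⟩ ⟨by omega, by omega⟩

theorem eq_of_split_of_split (S : IsSkewShape n L M)
    (hf1 : ¬ ContainsSub lam mu ![3, 2, 1, 1] ![2, 1, 0, 0])
    (hf2 : ¬ ContainsSub lam mu ![3, 2, 2, 1] ![2, 1, 1, 0])
    (hf3 : ¬ ContainsSub lam mu ![3, 3, 2, 1] ![2, 2, 1, 0]) {p s t : ℕ}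
    (hpn : p + 1 < n) (hp : L (p + 1) = M p + 1) (hsn : s + 1 < n) (hs : L (s + 1) = M s)
    (htn : t + 1 < n) (ht : L (t + 1) = M t) : s = t := by
  by_contra hne
  wlog hst : s < t generalizing s t
  · exact this htn ht hsn hs (Ne.symm hne) (by omega)
  rcases lt_trichotomy p s with hps | rfl | hsp
  · exact false_of_glued_split_split S hf3 hps hst htn hp hs ht
  · omega
  rcases lt_trichotomy p t with hpt | rfl | htp
  · exact false_of_split_glued_split S hf2 hsp hpt htn hs hp ht
  · omega
  · exact false_of_split_split_glued S hf1 hst htp hpn hs ht hp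

theorem block_of_wide (S : IsSkewShape n L M) (h : ¬ ContainsSub lam mu ![3, 2] ![1, 0])
    {p : ℕ} (hw : M p + 2 ≤ L (p + 1)) :
    M (p + 1) = M p ∧ L p = M p + 2 ∧ L (p + 1) = M p + 2 := by
  have := S.antitone_lam (show p ≤ p + 1 by omega)
  have := S.antitone_mu (show p ≤ p + 1 by omega)
  have hM : M (p + 1) = M p := by
    by_contra
    exact no_32_10 h (show p < p + 1 by omega) (x := M p) (y := M p + 1) (z := M p + 2)
      (by omega) (by omega) ⟨by omega, by omega⟩ ⟨by omega, by omega⟩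
  have hL : L p ≤ M p + 2 := by
    by_contra
    exact no_32_10 h (show p < p + 1 by omega) (x := M p + 1) (y := M p + 2) (z := M p + 3)
      (by omega) (by omega) ⟨by omega, by omega⟩ ⟨by omega, by omega⟩
  exact ⟨hM, by omega, by omega⟩

theorem false_of_block_of_row_below (S : IsSkewShape n L M)
    (h2 : ¬ ContainsSub lam mu ![2, 2, 1] ![1, 0, 0])
    (h6 : ¬ ContainsSub lam mu ![3, 3, 1] ![2, 1, 0]) {p : ℕ} (hpn : p + 2 < n)
    (hM : M (p + 1) = M p) (hL : L (p + 1) = M p + 2) : False := by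
  have := S.antitone_lam (show p ≤ p + 1 by omega)
  have := S.antitone_mu (show p + 1 ≤ p + 2 by omega)
  have : M (p + 1) ≤ L (p + 2) := S.mu_le_lam_succ (p + 1) hpn
  have := S.mu_lt_lam (p + 2) hpn
  rcases le_or_gt (M p + 1) (L (p + 2)) with hc | hc
  · exact no_221_100 h2 (show p < p + 1 by omega) (show p + 1 < p + 2 by omega)
      (x := M p + 1) (y := M p + 2) (by omega)
      ⟨by omega, by omega⟩ ⟨by omega, by omega⟩ ⟨by omega, by omega⟩
  · exact no_331_210 h6 (show p < p + 1 by omega) (show p + 1 < p + 2 by omega)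
      (x := M p) (y := M p + 1) (z := M p + 2) (by omega) (by omega)
      ⟨by omega, by omega⟩ ⟨by omega, by omega⟩ ⟨by omega, by omega⟩

theorem false_of_block_of_row_above (S : IsSkewShape n L M)
    (h2 : ¬ ContainsSub lam mu ![2, 2, 1] ![1, 0, 0])
    (h5 : ¬ ContainsSub lam mu ![3, 2, 2] ![2, 1, 0]) {p : ℕ} (hpn : p + 2 < n)
    (hM : M (p + 2) = M (p + 1)) (hL : L (p + 1) = M (p + 1) + 2)
    (hL' : L (p + 2) = M (p + 1) + 2) : False := by
  have := S.antitone_lam (show p ≤ p + 1 by omega)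
  have := S.antitone_mu (show p ≤ p + 1 by omega)
  have := S.mu_le_lam_succ p (by omega)
  have := S.mu_lt_lam p (by omega)
  rcases le_or_gt (M p) (M (p + 1) + 1) with hc | hc
  · exact no_221_100 h2 (show p < p + 1 by omega) (show p + 1 < p + 2 by omega)
      (x := M (p + 1) + 1) (y := M (p + 1) + 2) (by omega)
      ⟨by omega, by omega⟩ ⟨by omega, by omega⟩ ⟨by omega, by omega⟩
  · exact no_322_210 h5 (show p < p + 1 by omega) (show p + 1 < p + 2 by omega)
      (x := M (p + 1) + 1) (y := M (p + 1) + 2) (z := M (p + 1) + 3) (by omega) (by omega)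
      ⟨by omega, by omega⟩ ⟨by omega, by omega⟩ ⟨by omega, by omega⟩

theorem isTwoByTwoBox_of_wide (S : IsSkewShape n L M)
    (h1 : ¬ ContainsSub lam mu ![3, 2] ![1, 0]) (h2 : ¬ ContainsSub lam mu ![2, 2, 1] ![1, 0, 0])
    (h5 : ¬ ContainsSub lam mu ![3, 2, 2] ![2, 1, 0])
    (h6 : ¬ ContainsSub lam mu ![3, 3, 1] ![2, 1, 0]) {p : ℕ} (hpn : p + 1 < n)
    (hw : M p + 2 ≤ L (p + 1)) : IsTwoByTwoBox lam mu := by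
  obtain ⟨hM, hLp, hLp'⟩ := block_of_wide S h1 hw
  have hn : n = p + 2 := by
    by_contra
    exact false_of_block_of_row_below S h2 h6 (by omega) hM hLp'
  have hp : p = 0 := by
    rcases p with _ | p
    · rfl
    · exact (false_of_block_of_row_above S h2 h5 (by omega) hM hLp hLp').elim
  have hM1 : M (p + 1) = 0 := by
    have := S.mu_last
    rwa [show n - 1 = p + 1 by omega] at this
  refine ⟨by omega, ?_, ?_⟩ <;> simp only [Fin.forall_iff, Fin.apply_mk_eq_extend (α := ℤ)] <;>
    intro i hi <;> obtain rfl | rfl : i = p ∨ i = p + 1 := by omega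
  all_goals omega

theorem isHookLike_of_split_zero (S : IsSkewShape n L M)
    (h2 : ¬ ContainsSub lam mu ![2, 2, 1] ![1, 0, 0])
    (h3 : ¬ ContainsSub lam mu ![3, 2, 1] ![2, 0, 0])
    (h5 : ¬ ContainsSub lam mu ![3, 2, 2] ![2, 1, 0]) {k : ℕ} (hn : n = k + 3)
    (hs : L 1 = M 0) (hg : ∀ i, 1 ≤ i → i ≤ k + 1 → L (i + 1) = M i + 1) :
    IsHookLike lam mu := by
  have hrun := mu_eq_of_glued_run S h2 hg
  have hlast : M (k + 2) = 0 := by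
    have := S.mu_last
    rwa [show n - 1 = k + 2 by omega] at this
  have := S.mu_lt_lam 0 (by omega)
  have := S.mu_lt_lam 1 (by omega)
  have := S.antitone_mu (show 1 ≤ 2 by omega)
  have := S.antitone_mu (show 1 ≤ k + 2 by omega)
  have hL2 : L 2 = M 1 + 1 := by
    have := hg 1 le_rfl (by omega)
    omega
  have hL1 : L 1 = M 1 + 1 := by
    by_contra
    exact no_321_200 h3 (show 0 < 1 by omega) (show 1 < 2 by omega)
      (x := M 1 + 1) (y := M 1 + 2) (z := M 0 + 1) (by omega) (by omega)
      ⟨by omega, by omega⟩ ⟨by omega, by omega⟩ ⟨by omega, by omega⟩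
  have hL : ∀ i, 1 ≤ i → i ≤ k + 2 → L i = M 1 + 1 := by
    intro i h1i hik
    obtain ⟨j, rfl⟩ : ∃ j, i = j + 1 := ⟨i - 1, by omega⟩
    rcases Nat.eq_zero_or_pos j with rfl | hj
    · exact hL1
    · have := hg j hj (by omega)
      have := hrun j hj (by omega)
      omega
  have hM1 : M 1 = 0 := by
    have := hrun (k + 1) (by omega) le_rfl
    have := hL (k + 1) (by omega) (by omega)
    have := hL (k + 2) (by omega) le_rfl
    by_contra
    exact no_322_210 h5 (show 0 < k + 1 by omega) (show k + 1 < k + 2 by omega)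
      (x := M 1) (y := M 1 + 1) (z := M 1 + 2) (by omega) (by omega)
      ⟨by omega, by omega⟩ ⟨by omega, by omega⟩ ⟨by omega, by omega⟩
  refine ⟨L 0, by omega, ?_, Or.inr ?_⟩ <;>
    simp only [Fin.forall_iff, Fin.apply_mk_eq_extend (α := ℤ)] <;> intro i hi <;> split_ifs with h0
  · rw [h0]
  · have := hL i (by omega) (by omega); omega
  · rw [h0]; omega
  · rcases eq_or_lt_of_le (show i ≤ k + 2 by omega) with rfl | hik
    · exact hlast
    · have := hrun i (by omega) (by omega); omega

theorem isReverseHookLike_of_split_last (S : IsSkewShape n L M)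
    (h2 : ¬ ContainsSub lam mu ![2, 2, 1] ![1, 0, 0])
    (h4 : ¬ ContainsSub lam mu ![3, 2, 1] ![1, 1, 0])
    (h6 : ¬ ContainsSub lam mu ![3, 3, 1] ![2, 1, 0]) {k : ℕ} (hn : n = k + 3)
    (hs : L (k + 2) = M (k + 1)) (hg : ∀ i, i ≤ k → L (i + 1) = M i + 1) :
    IsReverseHookLike lam mu := by
  have hrun := mu_eq_of_glued_run S h2 (a := 0) fun i _ => hg i
  have hL : ∀ i, 1 ≤ i → i ≤ k + 1 → L i = M 0 + 1 := by
    intro i h1i hik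
    obtain ⟨j, rfl⟩ : ∃ j, i = j + 1 := ⟨i - 1, by omega⟩
    have := hg j (by omega)
    have := hrun j (by omega) (by omega)
    omega
  have := S.mu_lt_lam (k + 2) (by omega)
  have := S.antitone_mu (show k ≤ k + 1 by omega)
  have := S.antitone_lam (show k ≤ k + 1 by omega)
  have hMk := hrun k (by omega) le_rfl
  have hLk := hL (k + 1) (by omega) le_rfl
  have hMk' : M (k + 1) = M 0 := by
    by_contra
    exact no_331_210 h6 (show k < k + 1 by omega) (show k + 1 < k + 2 by omega)
      (x := M (k + 1)) (y := M 0) (z := M 0 + 1) (by omega) (by omega)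
      ⟨by omega, by omega⟩ ⟨by omega, by omega⟩ ⟨by omega, by omega⟩
  have hL0 : L 0 = M 0 + 1 := by
    have := S.antitone_lam (show 0 ≤ 1 by omega)
    have := hL 1 le_rfl (by omega)
    by_contra
    exact no_321_110 h4 (show 0 < k + 1 by omega) (show k + 1 < k + 2 by omega)
      (x := M 0) (y := M 0 + 1) (z := M 0 + 2) (by omega) (by omega)
      ⟨by omega, by omega⟩ ⟨by omega, by omega⟩ ⟨by omega, by omega⟩
  have hlast : M (k + 2) = 0 := by
    have := S.mu_last
    rwa [show n - 1 = k + 2 by omega] at this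
  refine ⟨M 0 + 1, Or.inr ?_, ?_⟩ <;>
    simp only [Fin.forall_iff, Fin.apply_mk_eq_extend (α := ℤ)] <;> intro i hi <;> split_ifs with h
  · rw [show i = k + 2 by omega]; omega
  · rcases Nat.eq_zero_or_pos i with rfl | hi0
    · exact hL0
    · exact hL i hi0 (by omega)
  · rw [show i = k + 2 by omega]; exact hlast
  · rcases eq_or_lt_of_le (show i ≤ k + 1 by omega) with rfl | hik
    · omega
    · have := hrun i (by omega) (by omega); omega

theorem isHookLike_or_isReverseHookLike_of_glued (S : IsSkewShape n L M)
    (h1 : ¬ ContainsSub lam mu ![3, 2] ![1, 0]) (h2 : ¬ ContainsSub lam mu ![2, 2, 1] ![1, 0, 0])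
    {k : ℕ} (hn : n = k + 2) (hg : ∀ i, i ≤ k → L (i + 1) = M i + 1) :
    IsHookLike lam mu ∨ IsReverseHookLike lam mu := by
  have hrun := mu_eq_of_glued_run S h2 (a := 0) fun i _ => hg i
  have hL : ∀ i, 1 ≤ i → i ≤ k + 1 → L i = M 0 + 1 := by
    intro i h1i hik
    obtain ⟨j, rfl⟩ : ∃ j, i = j + 1 := ⟨i - 1, by omega⟩
    have := hg j (by omega)
    have := hrun j (by omega) (by omega)
    omega
  have hlast : M (k + 1) = 0 := by
    have := S.mu_last
    rwa [show n - 1 = k + 1 by omega] at this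
  have := S.mu_lt_lam 0 (by omega)
  have := S.antitone_mu (show 0 ≤ k + 1 by omega)
  have hM : ∀ i < n, M i = if i + 1 = n then 0 else M 0 := by
    intro i hi
    split_ifs with h
    · rw [show i = k + 1 by omega]; exact hlast
    · exact hrun i (by omega) (by omega)
  rcases eq_or_ne (M 0) 0 with hM0 | hM0
  · left
    refine ⟨L 0, by omega, ?_, Or.inl ?_⟩ <;>
      simp only [Fin.forall_iff, Fin.apply_mk_eq_extend (α := ℤ)] <;> intro i hi
    · split_ifs with h0
      · rw [h0]
      · have := hL i (by omega) (by omega); omega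
    · have := hM i hi; split_ifs at this <;> omega
  · right
    have hL0 : L 0 = M 0 + 1 := by
      have := S.antitone_lam (show 0 ≤ 1 by omega)
      have := hL 1 le_rfl (by omega)
      have := hL (k + 1) (by omega) le_rfl
      by_contra
      exact no_32_10 h1 (show 0 < k + 1 by omega) (x := M 0) (y := M 0 + 1) (z := M 0 + 2)
        (by omega) (by omega) ⟨by omega, by omega⟩ ⟨by omega, by omega⟩
    refine ⟨M 0 + 1, Or.inl ?_, ?_⟩ <;>
      simp only [Fin.forall_iff, Fin.apply_mk_eq_extend (α := ℤ)] <;> intro i hi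
    · rcases Nat.eq_zero_or_pos i with rfl | hi0
      · exact hL0
      · exact hL i hi0 (by omega)
    · rw [hM i hi]; split_ifs <;> omega

theorem isHookLike_or_isReverseHookLike (S : IsSkewShape n L M)
    (h1 : ¬ ContainsSub lam mu ![3, 2] ![1, 0]) (h2 : ¬ ContainsSub lam mu ![2, 2, 1] ![1, 0, 0])
    (h3 : ¬ ContainsSub lam mu ![3, 2, 1] ![2, 0, 0])
    (h4 : ¬ ContainsSub lam mu ![3, 2, 1] ![1, 1, 0])
    (h5 : ¬ ContainsSub lam mu ![3, 2, 2] ![2, 1, 0])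
    (h6 : ¬ ContainsSub lam mu ![3, 3, 1] ![2, 1, 0])
    (h7 : ¬ ContainsSub lam mu ![2, 2, 1, 1] ![1, 1, 0, 0])
    (hf1 : ¬ ContainsSub lam mu ![3, 2, 1, 1] ![2, 1, 0, 0])
    (hf2 : ¬ ContainsSub lam mu ![3, 2, 2, 1] ![2, 1, 1, 0])
    (hf3 : ¬ ContainsSub lam mu ![3, 3, 2, 1] ![2, 2, 1, 0])
    (hnarrow : ∀ p, p + 1 < n → L (p + 1) ≤ M p + 1)
    {i₀ : ℕ} (hi₀ : i₀ + 1 < n) (hov : M i₀ < L (i₀ + 1)) :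
    IsHookLike lam mu ∨ IsReverseHookLike lam mu := by
  have hglued : ∀ p, p + 1 < n → L (p + 1) ≠ M p → L (p + 1) = M p + 1 := fun p hp hne => by
    have := S.mu_le_lam_succ p hp
    have := hnarrow p hp
    omega
  have hg₀ : L (i₀ + 1) = M i₀ + 1 := hglued i₀ hi₀ hov.ne'
  by_cases hsplit : ∃ s, s + 1 < n ∧ L (s + 1) = M s
  · obtain ⟨s, hsn, hs⟩ := hsplit
    have hg : ∀ p, p + 1 < n → p ≠ s → L (p + 1) = M p + 1 := fun p hp hps =>
      hglued p hp fun hp' => hps (eq_of_split_of_split S hf1 hf2 hf3 hi₀ hg₀ hp hp' hsn hs)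
    have hs₀ : s ≠ i₀ := by rintro rfl; omega
    obtain ⟨k, hk⟩ : ∃ k, n = k + 3 := ⟨n - 3, by omega⟩
    rcases Nat.eq_zero_or_pos s with rfl | hs0
    · exact Or.inl <| isHookLike_of_split_zero S h2 h3 h5 hk hs
        fun i h1i hik => hg i (by omega) (by omega)
    rcases eq_or_lt_of_le (show s ≤ k + 1 by omega) with rfl | hsk
    · exact Or.inr <| isReverseHookLike_of_split_last S h2 h4 h6 hk hs
        fun i hik => hg i (by omega) (by omega)
    obtain ⟨q, rfl⟩ : ∃ q, s = q + 1 := ⟨s - 1, by omega⟩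
    exact (false_of_glued_split_glued S h7 (show q < q + 1 by omega) (show q + 1 < q + 2 by omega)
      (hg q (by omega) (by omega)) hs (hg (q + 2) (by omega) (by omega))).elim
  · push Not at hsplit
    obtain ⟨k, hk⟩ : ∃ k, n = k + 2 := ⟨n - 2, by omega⟩
    exact isHookLike_or_isReverseHookLike_of_glued S h1 h2 hk
      fun i hik => hglued i (by omega) (hsplit i (by omega))

theorem skew_classification (S : IsSkewShape n L M)
    (h1 : ¬ ContainsSub lam mu ![3, 2] ![1, 0]) (h2 : ¬ ContainsSub lam mu ![2, 2, 1] ![1, 0, 0])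
    (h3 : ¬ ContainsSub lam mu ![3, 2, 1] ![2, 0, 0])
    (h4 : ¬ ContainsSub lam mu ![3, 2, 1] ![1, 1, 0])
    (h5 : ¬ ContainsSub lam mu ![3, 2, 2] ![2, 1, 0])
    (h6 : ¬ ContainsSub lam mu ![3, 3, 1] ![2, 1, 0])
    (h7 : ¬ ContainsSub lam mu ![2, 2, 1, 1] ![1, 1, 0, 0])
    (hf1 : ¬ ContainsSub lam mu ![3, 2, 1, 1] ![2, 1, 0, 0])
    (hf2 : ¬ ContainsSub lam mu ![3, 2, 2, 1] ![2, 1, 1, 0])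
    (hf3 : ¬ ContainsSub lam mu ![3, 3, 2, 1] ![2, 2, 1, 0]) :
    IsDisjointRows lam mu ∨ IsTwoByTwoBox lam mu ∨ IsHookLike lam mu ∨
      IsReverseHookLike lam mu := by
  by_cases hdisj : ∀ i, i + 1 < n → L (i + 1) ≤ M i
  · left
    simp only [IsDisjointRows, Fin.forall_iff, Fin.apply_mk_eq_extend (α := ℤ)]
    exact fun i _ hi => hdisj i hi
  push Not at hdisj
  obtain ⟨i₀, hi₀, hov⟩ := hdisj
  by_cases hwide : ∃ p, p + 1 < n ∧ M p + 2 ≤ L (p + 1)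
  · obtain ⟨p, hpn, hw⟩ := hwide
    exact Or.inr <| Or.inl <| isTwoByTwoBox_of_wide S h1 h2 h5 h6 hpn hw
  push Not at hwide
  exact Or.inr <| Or.inr <| isHookLike_or_isReverseHookLike S h1 h2 h3 h4 h5 h6 h7 hf1 hf2 hf3
    (fun p hp => by have := hwide p hp; omega) hi₀ hov

end

theorem statement12_general (n : ℕ) (hn : 1 ≤ n) (lam mu : Fin n → ℤ)
    (hlam : Antitone lam) (hmu : Antitone mu)
    (hmu0 : ∀ j, 0 ≤ mu j)
    (hrows : ∀ i, mu i < lam i)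
    (hcols : ∀ c : ℤ, 1 ≤ c → c ≤ lam ⟨0, hn⟩ → ∃ i, mu i < c ∧ c ≤ lam i)
    (h1 : ¬ ContainsSub lam mu ![3, 2] ![1, 0])
    (h2 : ¬ ContainsSub lam mu ![2, 2, 1] ![1, 0, 0])
    (h3 : ¬ ContainsSub lam mu ![3, 2, 1] ![2, 0, 0])
    (h4 : ¬ ContainsSub lam mu ![3, 2, 1] ![1, 1, 0])
    (h5 : ¬ ContainsSub lam mu ![3, 2, 2] ![2, 1, 0])
    (h6 : ¬ ContainsSub lam mu ![3, 3, 1] ![2, 1, 0])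
    (h7 : ¬ ContainsSub lam mu ![2, 2, 1, 1] ![1, 1, 0, 0])
    (hf1 : ∀ r : ℕ, 4 ≤ r → ¬ ContainsSub lam mu
      (fun i : Fin r => if (i : ℕ) = 0 then 3 else if (i : ℕ) = 1 then 2 else 1)
      (fun i : Fin r => if (i : ℕ) = 0 then 2 else if (i : ℕ) = 1 then 1 else 0))
    (hf2 : ∀ r : ℕ, 4 ≤ r → ¬ ContainsSub lam mu
      (fun i : Fin r => if (i : ℕ) = 0 then 3 else if (i : ℕ) = r - 1 then 1 else 2)
      (fun i : Fin r => if (i : ℕ) = 0 then 2 else if (i : ℕ) = r - 1 then 0 else 1))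
    (hf3 : ∀ r : ℕ, 4 ≤ r → ¬ ContainsSub lam mu
      (fun i : Fin r => if (i : ℕ) = r - 1 then 1 else if (i : ℕ) = r - 2 then 2 else 3)
      (fun i : Fin r => if (i : ℕ) = r - 1 then 0 else if (i : ℕ) = r - 2 then 1 else 2)) :
    -- (a) disjoint union of rows
    (∀ i : Fin n, ∀ h : (i : ℕ) + 1 < n, lam ⟨(i : ℕ) + 1, h⟩ ≤ mu i) ∨
    -- (b) the 2×2-box
    (n = 2 ∧ (∀ i, lam i = 2) ∧ (∀ i, mu i = 0)) ∨
    -- (c) a hook, possibly with the corner box missing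
    (∃ h : ℤ, 1 ≤ h ∧ (∀ i : Fin n, lam i = if (i : ℕ) = 0 then h else 1) ∧
      ((∀ i, mu i = 0) ∨ (∀ i : Fin n, mu i = if (i : ℕ) = 0 then 1 else 0))) ∨
    -- (d) a reverse hook, possibly with the corner box missing
    (∃ h : ℤ, ((∀ i, lam i = h) ∨
        (∀ i : Fin n, lam i = if (i : ℕ) + 1 = n then h - 1 else h)) ∧
      (∀ i : Fin n, mu i = if (i : ℕ) + 1 = n then 0 else h - 1)) := by
  have q1 : ¬ ContainsSub lam mu ![3, 2, 1, 1] ![2, 1, 0, 0] := by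
    convert hf1 4 le_rfl using 2 <;> ext i <;> fin_cases i <;> rfl
  have q2 : ¬ ContainsSub lam mu ![3, 2, 2, 1] ![2, 1, 1, 0] := by
    convert hf2 4 le_rfl using 2 <;> ext i <;> fin_cases i <;> rfl
  have q3 : ¬ ContainsSub lam mu ![3, 3, 2, 1] ![2, 2, 1, 0] := by
    convert hf3 4 le_rfl using 2 <;> ext i <;> fin_cases i <;> rfl
  exact skew_classification (isSkewShape_extend hn hlam hmu hmu0 hrows hcols)
    h1 h2 h3 h4 h5 h6 h7 q1 q2 q3

/-- A skew diagram with no empty rows or columns that avoids the listed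
forbidden subdiagrams is a disjoint union of rows, the 2×2-box, a hook
(possibly with the corner box missing), or a reverse hook (possibly with the
corner box missing). -/
theorem statement12 (n : ℕ) (hn : 1 ≤ n) (lam mu : Fin n → ℤ)
    (hlam : Antitone lam) (hmu : Antitone mu)
    (hmu0 : ∀ j, 0 ≤ mu j) (hge : ∀ j, mu j ≤ lam j)
    (hrows : ∀ i, mu i < lam i)
    (hcols : ∀ c : ℤ, 1 ≤ c → c ≤ lam ⟨0, hn⟩ → ∃ i, mu i < c ∧ c ≤ lam i)
    (h1 : ¬ ContainsSub lam mu ![3, 2] ![1, 0])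
    (h2 : ¬ ContainsSub lam mu ![2, 2, 1] ![1, 0, 0])
    (h3 : ¬ ContainsSub lam mu ![3, 2, 1] ![2, 0, 0])
    (h4 : ¬ ContainsSub lam mu ![3, 2, 1] ![1, 1, 0])
    (h5 : ¬ ContainsSub lam mu ![3, 2, 2] ![2, 1, 0])
    (h6 : ¬ ContainsSub lam mu ![3, 3, 1] ![2, 1, 0])
    (h7 : ¬ ContainsSub lam mu ![2, 2, 1, 1] ![1, 1, 0, 0])
    (hf1 : ∀ r : ℕ, 4 ≤ r → ¬ ContainsSub lam mu
      (fun i : Fin r => if (i : ℕ) = 0 then 3 else if (i : ℕ) = 1 then 2 else 1)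
      (fun i : Fin r => if (i : ℕ) = 0 then 2 else if (i : ℕ) = 1 then 1 else 0))
    (hf2 : ∀ r : ℕ, 4 ≤ r → ¬ ContainsSub lam mu
      (fun i : Fin r => if (i : ℕ) = 0 then 3 else if (i : ℕ) = r - 1 then 1 else 2)
      (fun i : Fin r => if (i : ℕ) = 0 then 2 else if (i : ℕ) = r - 1 then 0 else 1))
    (hf3 : ∀ r : ℕ, 4 ≤ r → ¬ ContainsSub lam mu
      (fun i : Fin r => if (i : ℕ) = r - 1 then 1 else if (i : ℕ) = r - 2 then 2 else 3)
      (fun i : Fin r => if (i : ℕ) = r - 1 then 0 else if (i : ℕ) = r - 2 then 1 else 2)) :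
    -- (a) disjoint union of rows
    (∀ i : Fin n, ∀ h : (i : ℕ) + 1 < n, lam ⟨(i : ℕ) + 1, h⟩ ≤ mu i) ∨
    -- (b) the 2×2-box
    (n = 2 ∧ (∀ i, lam i = 2) ∧ (∀ i, mu i = 0)) ∨
    -- (c) a hook, possibly with the corner box missing
    (∃ h : ℤ, 1 ≤ h ∧ (∀ i : Fin n, lam i = if (i : ℕ) = 0 then h else 1) ∧
      ((∀ i, mu i = 0) ∨ (∀ i : Fin n, mu i = if (i : ℕ) = 0 then 1 else 0))) ∨
    -- (d) a reverse hook, possibly with the corner box missing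
    (∃ h : ℤ, ((∀ i, lam i = h) ∨
        (∀ i : Fin n, lam i = if (i : ℕ) + 1 = n then h - 1 else h)) ∧
      (∀ i : Fin n, mu i = if (i : ℕ) + 1 = n then 0 else h - 1)) :=
  statement12_general n hn lam mu hlam hmu hmu0 hrows hcols h1 h2 h3 h4 h5 h6 h7 hf1 hf2 hf3
end
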